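/- arXiv:1809.01695 — 3 statements merged into one kernel-verified Lean document; each statement's English description precedes it below -/
import Mathlib

section
/- Let B be a bounded selfadjoint operator on a complex Hilbert space H, S a closed subspace of H, and S = S+ ⊕_B S− any decomposition. Then the following are equivalent: (i) B is S-weakly complementable; (ii) there exist selfadjoint B1, B2, B3 ∈ L(H) with B2 and B3 positive, B = B1 + B2 − B3, S ⊆ N(B1), S− ⊆ N(B2), and S+ ⊆ N(B3); (iii) the sets M^−(B, S+^⊥) and M^+(B, S−^⊥) are non-empty; (iv) B is S+-weakly complementable and B is S−-weakly complementable. -/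
open ContinuousLinearMap

noncomputable section

variable {H : Type*} [NormedAddCommGroup H] [InnerProductSpace ℂ H] [CompleteSpace H]

/-- The orthogonal projection onto a closed subspace `S`, as an endomorphism of `H`. -/
def projL (S : Submodule ℂ H) [S.HasOrthogonalProjection] : H →L[ℂ] H :=
  S.subtypeL.comp S.orthogonalProjectionOnto

/-- The corner `a = P_S B P_S` of the block decomposition of `B` w.r.t. `H = S ⊕ Sᗮ`. -/
def blockA (B : H →L[ℂ] H) (S : Submodule ℂ H) [S.HasOrthogonalProjection] : H →L[ℂ] H :=
  projL S * B * projL S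

/-- The corner `b = P_S B P_{Sᗮ}` of the block decomposition of `B` w.r.t. `H = S ⊕ Sᗮ`. -/
def blockB (B : H →L[ℂ] H) (S : Submodule ℂ H) [S.HasOrthogonalProjection] : H →L[ℂ] H :=
  projL S * B * (1 - projL S)

/-- The corner `c = P_{Sᗮ} B P_{Sᗮ}` of the block decomposition of `B` w.r.t. `H = S ⊕ Sᗮ`. -/
def blockC (B : H →L[ℂ] H) (S : Submodule ℂ H) [S.HasOrthogonalProjection] : H →L[ℂ] H :=
  (1 - projL S) * B * (1 - projL S)

/-- `m = |a|^{1/2}`: `m` is the (unique) positive fourth root of `a⋆ a`. -/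
def IsSqrtAbs (a m : H →L[ℂ] H) : Prop :=
  m.IsPositive ∧ m ^ 4 = adjoint a * a

/-- `B` is `S`-weakly complementable: `range b ⊆ range |a|^{1/2}`. -/
def IsWeaklyComplementable (B : H →L[ℂ] H) (S : Submodule ℂ H)
    [S.HasOrthogonalProjection] : Prop :=
  ∃ m : H →L[ℂ] H, IsSqrtAbs (blockA B S) m ∧
    LinearMap.range (blockB B S : H →ₗ[ℂ] H) ≤ LinearMap.range (m : H →ₗ[ℂ] H)

/-- `B` is `S`-complementable: `H = S + B⁻¹(Sᗮ)`. -/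
def IsComplementable (B : H →L[ℂ] H) (S : Submodule ℂ H) : Prop :=
  S ⊔ Sᗮ.comap (B : H →ₗ[ℂ] H) = ⊤

/-- The set `P(B,S)` of `B`-selfadjoint bounded idempotents onto `S`. -/
def projSet (B : H →L[ℂ] H) (S : Submodule ℂ H) : Set (H →L[ℂ] H) :=
  {Q | Q * Q = Q ∧ LinearMap.range (Q : H →ₗ[ℂ] H) = S ∧ B * Q = adjoint Q * B}

/-- `Y` is the Schur complement `B_{/S} = [[0,0],[0, c - f⋆ u f]]`, where `f` is the reduced
solution of `b = |a|^{1/2} x` and `a = u |a|` is the polar decomposition of `a`. -/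
def IsSchur (B : H →L[ℂ] H) (S : Submodule ℂ H) [S.HasOrthogonalProjection]
    (Y : H →L[ℂ] H) : Prop :=
  ∃ m u f : H →L[ℂ] H,
    IsSqrtAbs (blockA B S) m ∧
    LinearMap.ker (u : H →ₗ[ℂ] H) = LinearMap.ker (blockA B S : H →ₗ[ℂ] H) ∧
    (∀ x ∈ (LinearMap.ker (blockA B S : H →ₗ[ℂ] H))ᗮ, ‖u x‖ = ‖x‖) ∧
    blockA B S = u * m ^ 2 ∧
    m * f = blockB B S ∧
    LinearMap.range (f : H →ₗ[ℂ] H) ≤ (LinearMap.range (m : H →ₗ[ℂ] H)).topologicalClosure ∧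
    Y = blockC B S - adjoint f * (u * f)

/-- The set `M⁻(B,T)`. -/
def Mminus (B : H →L[ℂ] H) (T : Submodule ℂ H) : Set (H →L[ℂ] H) :=
  {X | IsSelfAdjoint X ∧ (B - X).IsPositive ∧ LinearMap.range (X : H →ₗ[ℂ] H) ≤ T}

/-- The set `M⁺(B,T)`. -/
def Mplus (B : H →L[ℂ] H) (T : Submodule ℂ H) : Set (H →L[ℂ] H) :=
  {X | IsSelfAdjoint X ∧ (X - B).IsPositive ∧ LinearMap.range (X : H →ₗ[ℂ] H) ≤ T}

/-- `Y` is the Loewner maximum of `M`. -/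
def IsMaxOf (M : Set (H →L[ℂ] H)) (Y : H →L[ℂ] H) : Prop :=
  Y ∈ M ∧ ∀ X ∈ M, (Y - X).IsPositive

/-- `Z` is the Loewner minimum of `M`. -/
def IsMinOf (M : Set (H →L[ℂ] H)) (Z : H →L[ℂ] H) : Prop :=
  Z ∈ M ∧ ∀ X ∈ M, (X - Z).IsPositive

/-- `Z` is the greatest lower bound of `M` in the Loewner order on selfadjoint operators. -/
def IsGLBOf (M : Set (H →L[ℂ] H)) (Z : H →L[ℂ] H) : Prop :=
  IsSelfAdjoint Z ∧ (∀ X ∈ M, (X - Z).IsPositive) ∧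
    ∀ F : H →L[ℂ] H, IsSelfAdjoint F → (∀ X ∈ M, (X - F).IsPositive) → (Z - F).IsPositive

/-- `Y` is the least upper bound of `M` in the Loewner order on selfadjoint operators. -/
def IsLUBOf (M : Set (H →L[ℂ] H)) (Y : H →L[ℂ] H) : Prop :=
  IsSelfAdjoint Y ∧ (∀ X ∈ M, (Y - X).IsPositive) ∧
    ∀ F : H →L[ℂ] H, IsSelfAdjoint F → (∀ X ∈ M, (F - X).IsPositive) → (F - Y).IsPositive

/-- A decomposition `S = S₊ ⊕_B S₋` into a `B`-nonnegative and a `B`-nonpositive part. -/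
def IsWDecomp (B : H →L[ℂ] H) (S Sp Sm : Submodule ℂ H) : Prop :=
  (∀ x ∈ Sp, ∀ y ∈ Sm, (inner ℂ x y : ℂ) = 0) ∧
  Sp ⊔ Sm = S ∧
  (∀ x ∈ Sp, 0 ≤ (inner ℂ (B x) x : ℂ).re) ∧
  (∀ x ∈ Sm, (inner ℂ (B x) x : ℂ).re ≤ 0) ∧
  (∀ x ∈ Sp, ∀ y ∈ Sm, (inner ℂ (B x) y : ℂ) = 0)

/-- `Y` is Krein's shorted operator `B_{/T}` of the positive operator `B` to `T`:
the Loewner maximum of `{X : 0 ≤ X ≤ B, range X ⊆ Tᗮ}`. -/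
def IsShort (B : H →L[ℂ] H) (T : Submodule ℂ H) (Y : H →L[ℂ] H) : Prop :=
  (Y.IsPositive ∧ (B - Y).IsPositive ∧ LinearMap.range (Y : H →ₗ[ℂ] H) ≤ Tᗮ) ∧
    ∀ X : H →L[ℂ] H, X.IsPositive → (B - X).IsPositive → LinearMap.range (X : H →ₗ[ℂ] H) ≤ Tᗮ →
      (Y - X).IsPositive

/-- The set `{R⋆ Q⋆ B Q R : Q² = Q, N(Q) = T}`. -/
def comprSet2 (B R : H →L[ℂ] H) (T : Submodule ℂ H) : Set (H →L[ℂ] H) :=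
  {X | ∃ Q : H →L[ℂ] H, Q * Q = Q ∧ LinearMap.ker (Q : H →ₗ[ℂ] H) = T ∧
    X = adjoint R * (adjoint Q * B * Q) * R}

/-- The set `{Q⋆ B Q : Q² = Q, N(Q) = S}`. -/
def comprSet1 (B : H →L[ℂ] H) (S : Submodule ℂ H) : Set (H →L[ℂ] H) :=
  {X | ∃ Q : H →L[ℂ] H, Q * Q = Q ∧ LinearMap.ker (Q : H →ₗ[ℂ] H) = S ∧ X = adjoint Q * B * Q}

/-- The set `N⁻(W,T)` of the Krein space `(H, [x,y] = ⟨Jx,y⟩)`. -/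
def Nminus (J W : H →L[ℂ] H) (T : Submodule ℂ H) : Set (H →L[ℂ] H) :=
  {X | IsSelfAdjoint (J * X) ∧ (J * (W - X)).IsPositive ∧ LinearMap.range (X : H →ₗ[ℂ] H) ≤ T}

/-- The set `N⁺(W,T)` of the Krein space `(H, [x,y] = ⟨Jx,y⟩)`. -/
def Nplus (J W : H →L[ℂ] H) (T : Submodule ℂ H) : Set (H →L[ℂ] H) :=
  {X | IsSelfAdjoint (J * X) ∧ (J * (X - W)).IsPositive ∧ LinearMap.range (X : H →ₗ[ℂ] H) ≤ T}

/-- `Y` is the maximum of `M` in the Krein order induced by `J`. -/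
def KMaxOf (J : H →L[ℂ] H) (M : Set (H →L[ℂ] H)) (Y : H →L[ℂ] H) : Prop :=
  Y ∈ M ∧ ∀ X ∈ M, (J * (Y - X)).IsPositive

/-- `Z` is the minimum of `M` in the Krein order induced by `J`. -/
def KMinOf (J : H →L[ℂ] H) (M : Set (H →L[ℂ] H)) (Z : H →L[ℂ] H) : Prop :=
  Z ∈ M ∧ ∀ X ∈ M, (J * (X - Z)).IsPositive

/-- `E` is a densely defined projection (idempotent) with kernel `N`. -/
def IsDDProj (N : Submodule ℂ H) (E : H →ₗ.[ℂ] H) : Prop :=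
  Dense (E.domain : Set H) ∧
  (∃ h : ∀ x : E.domain, E x ∈ E.domain, ∀ x : E.domain, E ⟨E x, h x⟩ = E x) ∧
  (LinearMap.ker E.toFun).map E.domain.subtype = N

/-- `G` is the (everywhere defined, bounded) composition `E ∘ T`; in particular
`range T ⊆ dom E`. -/
def IsBddComp (E : H →ₗ.[ℂ] H) (T G : H →L[ℂ] H) : Prop :=
  ∃ h : ∀ x : H, T x ∈ E.domain, ∀ x : H, G x = E ⟨T x, h x⟩

/-! Write `a, b` for the corners of `B` with respect to `S`, and `a₊ = P_{S₊} B P_{S₊} ≥ 0`,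
`a₋ = -P_{S₋} B P_{S₋} ≥ 0` for those with respect to `S₊` and `S₋`. Since `S₊ ⊥ S₋` and
`P_{S₋} B P_{S₊} = 0`, we get `a = a₊ - a₋` with `a₊^{1/2} a₋^{1/2} = 0`, hence
`|a|^{1/2} = a₊^{1/2} + a₋^{1/2}`, and `b = b₊ + b₋` splits accordingly; this gives (iv) ⇒ (i).
For (i) ⇒ (ii), Douglas' lemma yields `b = |a|^{1/2} f` with `f` vanishing on `S`, and
`B₂ = D₊⋆ D₊`, `B₃ = D₋⋆ D₋` with `D₊ = a₊^{1/2} + P_{S₊} f`, `D₋ = a₋^{1/2} - P_{S₋} f` work.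
(ii) ⇒ (iii) is witnessed by `B₁ - B₃ ∈ M⁻` and `B₁ + B₂ ∈ M⁺`. For (iii) ⇒ (iv), an `X` with
range in `S₊ᗮ` does not change the `S₊`-corners of `B`, and a positive operator such as `B - X`
is weakly complementable with respect to every subspace, again by Douglas' lemma. -/

set_option linter.unusedSectionVars false

section Projections

variable {U V W : Submodule ℂ H}

lemma projL_eq_starProjection (U : Submodule ℂ H) [U.HasOrthogonalProjection] :
    projL U = U.starProjection := rfl

lemma isSelfAdjoint_projL (U : Submodule ℂ H) [U.HasOrthogonalProjection] :
    IsSelfAdjoint (projL U) :=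
  isSelfAdjoint_starProjection U

lemma projL_mul_projL_of_isOrtho [U.HasOrthogonalProjection] [V.HasOrthogonalProjection]
    (h : U ⟂ V) : projL U * projL V = 0 :=
  h.starProjection_comp_starProjection

lemma projL_mul_projL_of_le [U.HasOrthogonalProjection] [V.HasOrthogonalProjection]
    (h : U ≤ V) : projL U * projL V = projL U :=
  Submodule.starProjection_comp_starProjection_of_le h

lemma projL_mul_projL_of_le' [U.HasOrthogonalProjection] [V.HasOrthogonalProjection]
    (h : U ≤ V) : projL V * projL U = projL U := by
  simpa only [star_mul, (isSelfAdjoint_projL _).star_eq] using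
    congr(star $(projL_mul_projL_of_le h))

lemma projL_mul_projL_self [U.HasOrthogonalProjection] : projL U * projL U = projL U :=
  projL_mul_projL_of_le le_rfl

lemma projL_eq_add_of_isOrtho [U.HasOrthogonalProjection] [V.HasOrthogonalProjection]
    [W.HasOrthogonalProjection] (h : U ⟂ V) (hW : U ⊔ V = W) :
    projL W = projL U + projL V := by
  ext x
  simp only [projL_eq_starProjection, add_apply]
  refine Submodule.eq_starProjection_of_mem_orthogonal ?_ ?_
  · rw [← hW]
    exact Submodule.add_mem_sup (U.starProjection_apply_mem x) (V.starProjection_apply_mem x)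
  · rw [← hW, ← Submodule.inf_orthogonal]
    refine ⟨?_, ?_⟩
    · simpa [sub_add_eq_sub_sub] using
        Uᗮ.sub_mem (U.sub_starProjection_mem_orthogonal x) (h.symm (V.starProjection_apply_mem x))
    · simpa [sub_add_eq_sub_sub_swap] using
        Vᗮ.sub_mem (V.sub_starProjection_mem_orthogonal x) (h (U.starProjection_apply_mem x))

lemma mul_projL_eq_zero_iff [U.HasOrthogonalProjection] {T : H →L[ℂ] H} :
    T * projL U = 0 ↔ U ≤ LinearMap.ker (T : H →ₗ[ℂ] H) := by
  refine ⟨fun h x hx => ?_, fun h => ext fun x => h (U.starProjection_apply_mem x)⟩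
  simpa [projL_eq_starProjection, Submodule.starProjection_eq_self_iff.mpr hx] using
    congr($h x)

lemma projL_mul_eq_zero_iff [U.HasOrthogonalProjection] {T : H →L[ℂ] H} :
    projL U * T = 0 ↔ LinearMap.range (T : H →ₗ[ℂ] H) ≤ Uᗮ := by
  simp only [ContinuousLinearMap.ext_iff, LinearMap.range_le_iff_comap, eq_top_iff]
  simp [SetLike.le_def, projL_eq_starProjection, Submodule.starProjection_apply_eq_zero_iff]

lemma range_le_orthogonal_of_le_ker {T : H →L[ℂ] H} (hT : IsSelfAdjoint T)
    (h : U ≤ LinearMap.ker (T : H →ₗ[ℂ] H)) : LinearMap.range (T : H →ₗ[ℂ] H) ≤ Uᗮ := by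
  refine (Submodule.le_orthogonal_orthogonal _).trans (Submodule.orthogonal_le ?_)
  rw [T.orthogonal_range, hT.adjoint_eq]
  exact h

end Projections

section Douglas

variable {m b : H →L[ℂ] H}

lemma range_le_range_of_mul_eq {c : H →L[ℂ] H} (h : m * c = b) :
    LinearMap.range (b : H →ₗ[ℂ] H) ≤ LinearMap.range (m : H →ₗ[ℂ] H) :=
  h ▸ LinearMap.range_comp_le_range _ _

/- Douglas' lemma, via the closed graph theorem: the graph `{(x, y) | b x = m y, y ⊥ ker m}` is
closed and projects bijectively onto the first factor. -/
theorem exists_mul_eq_of_range_le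
    (h : LinearMap.range (b : H →ₗ[ℂ] H) ≤ LinearMap.range (m : H →ₗ[ℂ] H)) :
    ∃ f : H →L[ℂ] H, m * f = b := by
  set N := LinearMap.ker (m : H →ₗ[ℂ] H)
  have : CompleteSpace N := m.isClosed_ker.completeSpace_coe
  let G : Submodule ℂ (H × H) :=
    LinearMap.ker ((b.coprod (-m) : H × H →L[ℂ] H) : H × H →ₗ[ℂ] H) ⊓ (⊤ : Submodule ℂ H).prod Nᗮ
  have hG : IsClosed (G : Set (H × H)) :=
    (b.coprod (-m)).isClosed_ker.inter (isClosed_univ.prod (Submodule.isClosed_orthogonal N))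
  have : CompleteSpace G := hG.completeSpace_coe
  have hmem {x y : H} : (x, y) ∈ G ↔ b x = m y ∧ y ∈ Nᗮ := by
    simp [G, ← sub_eq_add_neg, sub_eq_zero]
  let π : G →L[ℂ] H := (ContinuousLinearMap.fst ℂ H H).comp G.subtypeL
  have hinj : LinearMap.ker (π : G →ₗ[ℂ] H) = ⊥ := by
    refine LinearMap.ker_eq_bot'.mpr fun ⟨⟨x, y⟩, hxy⟩ hx => ?_
    obtain rfl : x = 0 := hx
    obtain ⟨hby, hyN⟩ := hmem.mp hxy
    obtain rfl : y = 0 :=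
      Submodule.disjoint_def.mp N.orthogonal_disjoint y (by simp [N, ← hby]) hyN
    rfl
  have hsurj : LinearMap.range (π : G →ₗ[ℂ] H) = ⊤ := by
    refine LinearMap.range_eq_top.mpr fun x => ?_
    obtain ⟨z, hz⟩ := h ⟨x, rfl⟩
    have hmz : m (N.starProjection z) = 0 := N.starProjection_apply_mem z
    refine ⟨⟨(x, z - N.starProjection z), hmem.mpr ⟨?_, N.sub_starProjection_mem_orthogonal z⟩⟩,
      rfl⟩
    simpa [hmz] using hz.symm
  let e := ContinuousLinearEquiv.ofBijective π hinj hsurj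
  refine ⟨(ContinuousLinearMap.snd ℂ H H).comp (G.subtypeL.comp (e.symm : H →L[ℂ] G)), ?_⟩
  ext x
  have hx : ((e.symm x : G) : H × H).1 = x := e.apply_symm_apply x
  have hG' := (hmem (x := ((e.symm x : G) : H × H).1)).mp (e.symm x).2
  simpa [hx] using hG'.1.symm

/- The converse half of Douglas' lemma: `b x = m w` for the Riesz representative `w` of a
Hahn–Banach extension of the bounded functional `m z ↦ ⟪b x, z⟫` on `range m`. -/
theorem range_le_range_of_norm_adjoint_apply_le (hm : IsSelfAdjoint m) {C : ℝ}
    (h : ∀ z, ‖adjoint b z‖ ≤ C * ‖m z‖) :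
    LinearMap.range (b : H →ₗ[ℂ] H) ≤ LinearMap.range (m : H →ₗ[ℂ] H) := by
  rintro _ ⟨x, rfl⟩
  have hker : LinearMap.ker (m : H →ₗ[ℂ] H) ≤
      LinearMap.ker ((innerSL ℂ (b x) : H →L[ℂ] ℂ) : H →ₗ[ℂ] ℂ) := by
    intro z hz
    have : adjoint b z = 0 := norm_le_zero_iff.mp (by simpa [show m z = 0 from hz] using h z)
    simp [← adjoint_inner_right, this]
  let φ : LinearMap.range (m : H →ₗ[ℂ] H) →ₗ[ℂ] ℂ :=
    (LinearMap.ker (m : H →ₗ[ℂ] H)).liftQ _ hker ∘ₗ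
      (m : H →ₗ[ℂ] H).quotKerEquivRange.symm.toLinearMap
  have hφ (z : H) : φ ⟨m z, LinearMap.mem_range_self _ z⟩ = inner ℂ (b x) z := by
    simp only [φ, LinearMap.coe_comp, LinearEquiv.coe_coe, Function.comp_apply]
    erw [LinearMap.quotKerEquivRange_symm_apply_image]
    rfl
  have hbound (u : LinearMap.range (m : H →ₗ[ℂ] H)) : ‖φ u‖ ≤ (‖x‖ * C) * ‖u‖ := by
    obtain ⟨z, hz⟩ := u.2
    obtain rfl : u = ⟨m z, LinearMap.mem_range_self _ z⟩ := Subtype.ext hz.symm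
    rw [hφ, ← adjoint_inner_right]
    calc ‖inner ℂ x (adjoint b z)‖ ≤ ‖x‖ * ‖adjoint b z‖ := norm_inner_le_norm _ _
      _ ≤ ‖x‖ * (C * ‖m z‖) := by gcongr; exact h z
      _ = _ := by rw [mul_assoc]; rfl
  obtain ⟨Ψ, hΨ, -⟩ := exists_extension_norm_eq _ (φ.mkContinuous _ hbound)
  refine ⟨(InnerProductSpace.toDual ℂ H).symm Ψ, ext_inner_right ℂ fun z => ?_⟩
  calc inner ℂ (m ((InnerProductSpace.toDual ℂ H).symm Ψ)) z
      = inner ℂ ((InnerProductSpace.toDual ℂ H).symm Ψ) (m z) := hm.isSymmetric _ _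
    _ = Ψ (m z) := InnerProductSpace.toDual_symm_apply
    _ = inner ℂ (b x) z := (hΨ ⟨m z, LinearMap.mem_range_self _ z⟩).trans (hφ z)

end Douglas

section Blocks

variable {B X : H →L[ℂ] H} {U : Submodule ℂ H} [U.HasOrthogonalProjection]

lemma blockA_sub_of_range_le (h : LinearMap.range (X : H →ₗ[ℂ] H) ≤ Uᗮ) :
    blockA (B - X) U = blockA B U := by
  rw [blockA, blockA, mul_sub, projL_mul_eq_zero_iff.mpr h, sub_zero]

lemma blockB_sub_of_range_le (h : LinearMap.range (X : H →ₗ[ℂ] H) ≤ Uᗮ) :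
    blockB (B - X) U = blockB B U := by
  rw [blockB, blockB, mul_sub (projL U) B X, projL_mul_eq_zero_iff.mpr h, sub_zero]

lemma blockA_neg : blockA (-B) U = -blockA B U := by
  simp only [blockA, mul_neg, neg_mul]

lemma blockB_neg : blockB (-B) U = -blockB B U := by
  simp only [blockB, mul_neg, neg_mul]

lemma adjoint_blockB (hB : IsSelfAdjoint B) :
    adjoint (blockB B U) = (1 - projL U) * B * projL U := by
  rw [blockB, ← star_eq_adjoint, star_mul, star_mul, star_sub, star_one,
    (isSelfAdjoint_projL U).star_eq, hB.star_eq, mul_assoc]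

lemma blockA_add_adjoint_blockB (hB : IsSelfAdjoint B) :
    blockA B U + adjoint (blockB B U) = B * projL U := by
  rw [blockA, adjoint_blockB hB]
  noncomm_ring

lemma isPositive_blockA (hB : IsSelfAdjoint B) (h : ∀ x ∈ U, 0 ≤ (inner ℂ (B x) x : ℂ).re) :
    (blockA B U).IsPositive := by
  refine isPositive_def'.mpr ⟨?_, fun x => ?_⟩
  · simp only [IsSelfAdjoint, blockA, star_mul, (isSelfAdjoint_projL U).star_eq, hB.star_eq,
      mul_assoc]
  · have hp := (isSelfAdjoint_projL U).isSymmetric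
    change 0 ≤ (inner ℂ (projL U (B (projL U x))) x).re
    rw [← coe_coe, hp, coe_coe]
    exact h _ (U.starProjection_apply_mem x)

lemma isWeaklyComplementable_sub_iff (h : LinearMap.range (X : H →ₗ[ℂ] H) ≤ Uᗮ) :
    IsWeaklyComplementable (B - X) U ↔ IsWeaklyComplementable B U := by
  simp only [IsWeaklyComplementable, blockA_sub_of_range_le h, blockB_sub_of_range_le h]

lemma isWeaklyComplementable_neg_iff :
    IsWeaklyComplementable (-B) U ↔ IsWeaklyComplementable B U := by
  simp only [IsWeaklyComplementable, IsSqrtAbs, blockA_neg, blockB_neg, map_neg, neg_mul_neg,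
    toLinearMap_neg, LinearMap.range_neg]

lemma exists_mul_eq_blockB_of_range_le {m : H →L[ℂ] H}
    (h : LinearMap.range (blockB B U : H →ₗ[ℂ] H) ≤ LinearMap.range (m : H →ₗ[ℂ] H)) :
    ∃ f : H →L[ℂ] H, m * f = blockB B U ∧ f * projL U = 0 := by
  obtain ⟨f, hf⟩ := exists_mul_eq_of_range_le h
  have hidem : (1 - projL U) * (1 - projL U) = 1 - projL U :=
    (Submodule.isIdempotentElem_starProjection U).one_sub
  refine ⟨f * (1 - projL U), by rw [← mul_assoc, hf, blockB, mul_assoc, hidem], ?_⟩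
  rw [mul_assoc, sub_mul, one_mul, projL_mul_projL_self, sub_self, mul_zero]

end Blocks

section SqrtAbs

variable {a c m m' : H →L[ℂ] H}

lemma isSelfAdjoint_sqrt (a : H →L[ℂ] H) : IsSelfAdjoint (CFC.sqrt a) :=
  IsSelfAdjoint.of_nonneg (CFC.sqrt_nonneg a)

lemma pow_four_eq_mul_self_mul_self (m : H →L[ℂ] H) : m ^ 4 = m * m * (m * m) := by
  noncomm_ring

lemma IsSqrtAbs.unique (hm : IsSqrtAbs a m) (hm' : IsSqrtAbs a m') : m = m' := by
  have h0 : 0 ≤ m := (nonneg_iff_isPositive m).mpr hm.1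
  have h0' : 0 ≤ m' := (nonneg_iff_isPositive m').mpr hm'.1
  rw [← CFC.mul_self_eq_mul_self_iff m m', ← CFC.mul_self_eq_mul_self_iff (m * m) (m' * m')
    (IsSelfAdjoint.of_nonneg h0).mul_self_nonneg (IsSelfAdjoint.of_nonneg h0').mul_self_nonneg,
    ← pow_four_eq_mul_self_mul_self, ← pow_four_eq_mul_self_mul_self, hm.2, hm'.2]

lemma isWeaklyComplementable_iff_range_le {B : H →L[ℂ] H} {U : Submodule ℂ H}
    [U.HasOrthogonalProjection] (hm : IsSqrtAbs (blockA B U) m) :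
    IsWeaklyComplementable B U ↔
      LinearMap.range (blockB B U : H →ₗ[ℂ] H) ≤ LinearMap.range (m : H →ₗ[ℂ] H) :=
  ⟨fun ⟨_, hm', h⟩ => hm'.unique hm ▸ h, fun h => ⟨m, hm, h⟩⟩

lemma isSqrtAbs_sqrt (ha : 0 ≤ a) : IsSqrtAbs a (CFC.sqrt a) := by
  refine ⟨(nonneg_iff_isPositive _).mp (CFC.sqrt_nonneg a), ?_⟩
  rw [pow_four_eq_mul_self_mul_self, CFC.sqrt_mul_sqrt_self a,
    (IsSelfAdjoint.of_nonneg ha).adjoint_eq]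

lemma isSqrtAbs_sub (ha : 0 ≤ a) (hc : 0 ≤ c) (h : CFC.sqrt a * CFC.sqrt c = 0) :
    IsSqrtAbs (a - c) (CFC.sqrt a + CFC.sqrt c) := by
  have h' : CFC.sqrt c * CFC.sqrt a = 0 := by
    simpa only [star_mul, (isSelfAdjoint_sqrt _).star_eq, star_zero] using congr(star $h)
  have hac : a * c = 0 := by
    rw [← CFC.sqrt_mul_sqrt_self a, ← CFC.sqrt_mul_sqrt_self c, mul_assoc,
      ← mul_assoc (CFC.sqrt a) (CFC.sqrt c), h, zero_mul, mul_zero]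
  have hca : c * a = 0 := by
    rw [← CFC.sqrt_mul_sqrt_self a, ← CFC.sqrt_mul_sqrt_self c, mul_assoc,
      ← mul_assoc (CFC.sqrt c) (CFC.sqrt a), h', zero_mul, mul_zero]
  have hsq : (CFC.sqrt a + CFC.sqrt c) * (CFC.sqrt a + CFC.sqrt c) = a + c := by
    rw [add_mul, mul_add, mul_add, h, h', CFC.sqrt_mul_sqrt_self a, CFC.sqrt_mul_sqrt_self c,
      add_zero, zero_add]
  refine ⟨(nonneg_iff_isPositive _).mp (add_nonneg (CFC.sqrt_nonneg a) (CFC.sqrt_nonneg c)), ?_⟩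
  rw [pow_four_eq_mul_self_mul_self, hsq,
    ((IsSelfAdjoint.of_nonneg ha).sub (IsSelfAdjoint.of_nonneg hc)).adjoint_eq]
  simp only [add_mul, mul_add, sub_mul, mul_sub, hac, hca]
  abel

lemma sqrt_mul_eq_zero {T : H →L[ℂ] H} (ha : 0 ≤ a) (h : a * T = 0) : CFC.sqrt a * T = 0 := by
  ext x
  have hsq : CFC.sqrt a (CFC.sqrt a (T x)) = 0 := by
    change (CFC.sqrt a * CFC.sqrt a * T) x = 0
    rw [CFC.sqrt_mul_sqrt_self a, h, zero_apply]
  have hself : inner ℂ (CFC.sqrt a (T x)) (CFC.sqrt a (T x)) = 0 := by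
    rw [← coe_coe, (isSelfAdjoint_sqrt a).isSymmetric, coe_coe, hsq, inner_zero_right]
  exact inner_self_eq_zero.mp hself

end SqrtAbs

section BlockRoots

variable {B : H →L[ℂ] H} {U : Submodule ℂ H} [U.HasOrthogonalProjection]

lemma sqrt_blockA_mul_projL (ha : 0 ≤ blockA B U) :
    CFC.sqrt (blockA B U) * projL U = CFC.sqrt (blockA B U) := by
  have h := sqrt_mul_eq_zero (T := 1 - projL U) ha (by
    rw [blockA, mul_sub, mul_one, mul_assoc _ (projL U), projL_mul_projL_self, sub_self])
  rwa [mul_sub, mul_one, sub_eq_zero, eq_comm] at h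

lemma projL_mul_sqrt_blockA (ha : 0 ≤ blockA B U) :
    projL U * CFC.sqrt (blockA B U) = CFC.sqrt (blockA B U) := by
  simpa only [star_mul, (isSelfAdjoint_projL _).star_eq, (isSelfAdjoint_sqrt _).star_eq]
    using congr(star $(sqrt_blockA_mul_projL ha))

end BlockRoots

lemma norm_apply_eq_of_adjoint_mul_self_eq {A C : H →L[ℂ] H}
    (h : adjoint A * A = adjoint C * C) (z : H) : ‖A z‖ = ‖C z‖ := by
  rw [apply_norm_eq_sqrt_inner_adjoint_left, apply_norm_eq_sqrt_inner_adjoint_left]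
  exact congr(√(RCLike.re (inner ℂ ($h z) z)))

theorem ContinuousLinearMap.IsPositive.isWeaklyComplementable {P : H →L[ℂ] H} (hP : P.IsPositive)
    (U : Submodule ℂ H) [U.HasOrthogonalProjection] : IsWeaklyComplementable P U := by
  have hP0 : 0 ≤ P := (nonneg_iff_isPositive P).mpr hP
  have ha : 0 ≤ blockA P U := (nonneg_iff_isPositive _).mpr (hP.conj_starProjection U)
  set r := CFC.sqrt P
  have hr : r * r = P := CFC.sqrt_mul_sqrt_self P hP0
  have hrsa : IsSelfAdjoint r := isSelfAdjoint_sqrt P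
  clear_value r
  have hadj : adjoint (blockB P U) = (1 - projL U) * r * (r * projL U) := by
    rw [adjoint_blockB hP.isSelfAdjoint, ← hr]
    noncomm_ring
  have hsq : adjoint (r * projL U) * (r * projL U) =
      adjoint (CFC.sqrt (blockA P U)) * CFC.sqrt (blockA P U) := by
    rw [(isSelfAdjoint_sqrt _).adjoint_eq, CFC.sqrt_mul_sqrt_self _ ha, ← star_eq_adjoint,
      star_mul, hrsa.star_eq, (isSelfAdjoint_projL U).star_eq, blockA, ← hr]
    noncomm_ring
  refine ⟨CFC.sqrt (blockA P U), isSqrtAbs_sqrt ha,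
    range_le_range_of_norm_adjoint_apply_le (isSelfAdjoint_sqrt _) (C := ‖r‖) fun z => ?_⟩
  calc ‖adjoint (blockB P U) z‖ = ‖Uᗮ.starProjection (r ((r * projL U) z))‖ := by
        rw [hadj, Submodule.starProjection_orthogonal']; rfl
    _ ≤ ‖r ((r * projL U) z)‖ := Uᗮ.norm_starProjection_apply_le _
    _ ≤ ‖r‖ * ‖(r * projL U) z‖ := r.le_opNorm _
    _ = ‖r‖ * ‖CFC.sqrt (blockA P U) z‖ := by rw [norm_apply_eq_of_adjoint_mul_self_eq hsq]

lemma adjoint_mul_self_add_mul_mul_eq {m p P f : H →L[ℂ] H} (hm : IsSelfAdjoint m)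
    (hp : IsSelfAdjoint p) (hmP : m * P = m) (hpm : p * m = m) (hfP : f * P = 0) :
    adjoint (m + p * f) * (m + p * f) * P = m * m + adjoint f * m := by
  rw [mul_assoc, add_mul, hmP, mul_assoc, hfP, mul_zero, add_zero, ← star_eq_adjoint, star_add,
    star_mul, hm.star_eq, hp.star_eq, star_eq_adjoint, add_mul, mul_assoc, hpm]

def HasKernelSplitting (B : H →L[ℂ] H) (S Sp Sm : Submodule ℂ H) : Prop :=
  ∃ B1 B2 B3 : H →L[ℂ] H, IsSelfAdjoint B1 ∧ IsSelfAdjoint B2 ∧ IsSelfAdjoint B3 ∧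
    B2.IsPositive ∧ B3.IsPositive ∧ B = B1 + B2 - B3 ∧
    S ≤ LinearMap.ker (B1 : H →ₗ[ℂ] H) ∧ Sm ≤ LinearMap.ker (B2 : H →ₗ[ℂ] H) ∧
    Sp ≤ LinearMap.ker (B3 : H →ₗ[ℂ] H)

namespace IsWDecomp

variable {B : H →L[ℂ] H} {S Sp Sm : Submodule ℂ H}

lemma le_left (hdec : IsWDecomp B S Sp Sm) : Sp ≤ S := hdec.2.1 ▸ le_sup_left

lemma le_right (hdec : IsWDecomp B S Sp Sm) : Sm ≤ S := hdec.2.1 ▸ le_sup_right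

lemma isOrtho (hdec : IsWDecomp B S Sp Sm) : Sp ⟂ Sm :=
  Submodule.isOrtho_iff_inner_eq.mpr hdec.1

lemma blockA_nonneg [Sp.HasOrthogonalProjection] (hB : IsSelfAdjoint B)
    (hdec : IsWDecomp B S Sp Sm) : 0 ≤ blockA B Sp :=
  (nonneg_iff_isPositive _).mpr (isPositive_blockA hB hdec.2.2.1)

lemma blockA_neg_nonneg [Sm.HasOrthogonalProjection] (hB : IsSelfAdjoint B)
    (hdec : IsWDecomp B S Sp Sm) : 0 ≤ blockA (-B) Sm :=
  (nonneg_iff_isPositive _).mpr <| isPositive_blockA hB.neg fun x hx => by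
    simpa using hdec.2.2.2.1 x hx

variable [Sp.HasOrthogonalProjection] [Sm.HasOrthogonalProjection]

lemma projL_mul_mul_projL (hdec : IsWDecomp B S Sp Sm) : projL Sm * B * projL Sp = 0 := by
  rw [mul_assoc, projL_mul_eq_zero_iff]
  rintro _ ⟨x, rfl⟩
  exact (Submodule.mem_orthogonal' _ _).mpr fun y hy =>
    hdec.2.2.2.2 _ (Sp.starProjection_apply_mem x) y hy

lemma projL_mul_mul_projL' (hB : IsSelfAdjoint B) (hdec : IsWDecomp B S Sp Sm) :
    projL Sp * B * projL Sm = 0 := by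
  simpa only [star_mul, (isSelfAdjoint_projL _).star_eq, hB.star_eq, star_zero, mul_assoc]
    using congr(star $(hdec.projL_mul_mul_projL))

lemma sqrt_mul_sqrt (hB : IsSelfAdjoint B) (hdec : IsWDecomp B S Sp Sm) :
    CFC.sqrt (blockA B Sp) * CFC.sqrt (blockA (-B) Sm) = 0 := by
  rw [← sqrt_blockA_mul_projL (hdec.blockA_nonneg hB),
    ← projL_mul_sqrt_blockA (hdec.blockA_neg_nonneg hB), mul_assoc, ← mul_assoc (projL Sp),
    projL_mul_projL_of_isOrtho hdec.isOrtho, zero_mul, mul_zero]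

lemma sqrt_mul_projL_right (hB : IsSelfAdjoint B) (hdec : IsWDecomp B S Sp Sm) :
    CFC.sqrt (blockA B Sp) * projL Sm = 0 := by
  rw [← sqrt_blockA_mul_projL (hdec.blockA_nonneg hB), mul_assoc,
    projL_mul_projL_of_isOrtho hdec.isOrtho, mul_zero]

lemma sqrt_neg_mul_projL_left (hB : IsSelfAdjoint B) (hdec : IsWDecomp B S Sp Sm) :
    CFC.sqrt (blockA (-B) Sm) * projL Sp = 0 := by
  rw [← sqrt_blockA_mul_projL (hdec.blockA_neg_nonneg hB), mul_assoc,
    projL_mul_projL_of_isOrtho hdec.isOrtho.symm, mul_zero]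

variable [S.HasOrthogonalProjection]

lemma projL_eq_add (hdec : IsWDecomp B S Sp Sm) : projL S = projL Sp + projL Sm :=
  projL_eq_add_of_isOrtho hdec.isOrtho hdec.2.1

lemma blockA_eq (hB : IsSelfAdjoint B) (hdec : IsWDecomp B S Sp Sm) :
    blockA B S = blockA B Sp - blockA (-B) Sm := by
  rw [blockA_neg, blockA, blockA, blockA, hdec.projL_eq_add]
  simp only [add_mul, mul_add, hdec.projL_mul_mul_projL, hdec.projL_mul_mul_projL' hB]
  abel

lemma blockB_eq (hB : IsSelfAdjoint B) (hdec : IsWDecomp B S Sp Sm) :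
    blockB B S = blockB B Sp - blockB (-B) Sm := by
  rw [blockB_neg, blockB, blockB, blockB, hdec.projL_eq_add]
  simp only [add_mul, mul_add, mul_sub, mul_one, hdec.projL_mul_mul_projL,
    hdec.projL_mul_mul_projL' hB]
  abel

lemma isSqrtAbs (hB : IsSelfAdjoint B) (hdec : IsWDecomp B S Sp Sm) :
    IsSqrtAbs (blockA B S) (CFC.sqrt (blockA B Sp) + CFC.sqrt (blockA (-B) Sm)) :=
  hdec.blockA_eq hB ▸
    isSqrtAbs_sub (hdec.blockA_nonneg hB) (hdec.blockA_neg_nonneg hB) (hdec.sqrt_mul_sqrt hB)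

lemma sqrt_mul_projL (hB : IsSelfAdjoint B) (hdec : IsWDecomp B S Sp Sm) :
    CFC.sqrt (blockA B Sp) * projL S = CFC.sqrt (blockA B Sp) := by
  rw [hdec.projL_eq_add, mul_add, sqrt_blockA_mul_projL (hdec.blockA_nonneg hB),
    hdec.sqrt_mul_projL_right hB, add_zero]

lemma sqrt_neg_mul_projL (hB : IsSelfAdjoint B) (hdec : IsWDecomp B S Sp Sm) :
    CFC.sqrt (blockA (-B) Sm) * projL S = CFC.sqrt (blockA (-B) Sm) := by
  rw [hdec.projL_eq_add, mul_add, sqrt_blockA_mul_projL (hdec.blockA_neg_nonneg hB),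
    hdec.sqrt_neg_mul_projL_left hB, zero_add]

theorem isWeaklyComplementable_of_left_of_right (hB : IsSelfAdjoint B) (hdec : IsWDecomp B S Sp Sm)
    (hp : IsWeaklyComplementable B Sp) (hm : IsWeaklyComplementable B Sm) :
    IsWeaklyComplementable B S := by
  set mp := CFC.sqrt (blockA B Sp)
  set mn := CFC.sqrt (blockA (-B) Sm)
  rw [← isWeaklyComplementable_neg_iff,
    isWeaklyComplementable_iff_range_le (isSqrtAbs_sqrt (hdec.blockA_neg_nonneg hB))] at hm
  rw [isWeaklyComplementable_iff_range_le (isSqrtAbs_sqrt (hdec.blockA_nonneg hB))] at hp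
  rw [isWeaklyComplementable_iff_range_le (hdec.isSqrtAbs hB), hdec.blockB_eq hB]
  have hmp : (mp + mn) * projL Sp = mp := by
    rw [add_mul, sqrt_blockA_mul_projL (hdec.blockA_nonneg hB), hdec.sqrt_neg_mul_projL_left hB,
      add_zero]
  have hmn : (mp + mn) * projL Sm = mn := by
    rw [add_mul, sqrt_blockA_mul_projL (hdec.blockA_neg_nonneg hB), hdec.sqrt_mul_projL_right hB,
      zero_add]
  calc LinearMap.range ((blockB B Sp - blockB (-B) Sm : H →L[ℂ] H) : H →ₗ[ℂ] H)
      ≤ LinearMap.range (blockB B Sp : H →ₗ[ℂ] H) ⊔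
          LinearMap.range ((-blockB (-B) Sm : H →L[ℂ] H) : H →ₗ[ℂ] H) := by
        rw [sub_eq_add_neg]; exact LinearMap.range_add_le _ _
    _ ≤ LinearMap.range (mp : H →ₗ[ℂ] H) ⊔ LinearMap.range (mn : H →ₗ[ℂ] H) := by
        rw [toLinearMap_neg, LinearMap.range_neg]; exact sup_le_sup hp hm
    _ ≤ LinearMap.range ((mp + mn : H →L[ℂ] H) : H →ₗ[ℂ] H) :=
        sup_le (range_le_range_of_mul_eq hmp) (range_le_range_of_mul_eq hmn)

theorem hasKernelSplitting (hB : IsSelfAdjoint B) (hdec : IsWDecomp B S Sp Sm)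
    (h : IsWeaklyComplementable B S) : HasKernelSplitting B S Sp Sm := by
  set mp := CFC.sqrt (blockA B Sp)
  set mn := CFC.sqrt (blockA (-B) Sm)
  rw [isWeaklyComplementable_iff_range_le (hdec.isSqrtAbs hB)] at h
  obtain ⟨f, hmf, hfS⟩ := exists_mul_eq_blockB_of_range_le h
  have hfp : f * projL Sp = 0 := by
    rw [← projL_mul_projL_of_le' hdec.le_left, ← mul_assoc, hfS, zero_mul]
  have hfm : f * projL Sm = 0 := by
    rw [← projL_mul_projL_of_le' hdec.le_right, ← mul_assoc, hfS, zero_mul]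
  set Dp := mp + projL Sp * f
  set Dm := mn + projL Sm * -f
  have hDp : adjoint Dp * Dp * projL S = blockA B Sp + adjoint f * mp := by
    rw [adjoint_mul_self_add_mul_mul_eq (isSelfAdjoint_sqrt _) (isSelfAdjoint_projL Sp)
      (hdec.sqrt_mul_projL hB) (projL_mul_sqrt_blockA (hdec.blockA_nonneg hB)) hfS,
      CFC.sqrt_mul_sqrt_self _ (hdec.blockA_nonneg hB)]
  have hDm : adjoint Dm * Dm * projL S = blockA (-B) Sm - adjoint f * mn := by
    rw [adjoint_mul_self_add_mul_mul_eq (isSelfAdjoint_sqrt _) (isSelfAdjoint_projL Sm)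
      (hdec.sqrt_neg_mul_projL hB) (projL_mul_sqrt_blockA (hdec.blockA_neg_nonneg hB))
      (by rw [neg_mul, hfS, neg_zero]), CFC.sqrt_mul_sqrt_self _ (hdec.blockA_neg_nonneg hB),
      map_neg, neg_mul, ← sub_eq_add_neg]
  have hB1 : (B - adjoint Dp * Dp + adjoint Dm * Dm) * projL S = 0 := by
    have hadj : adjoint (blockB B S) = adjoint f * (mp + mn) := by
      rw [← hmf, ← star_eq_adjoint, star_mul, star_eq_adjoint,
        ((isSelfAdjoint_sqrt _).add (isSelfAdjoint_sqrt _)).star_eq]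
    calc (B - adjoint Dp * Dp + adjoint Dm * Dm) * projL S
        = B * projL S - (blockA B Sp - blockA (-B) Sm + adjoint f * (mp + mn)) := by
          rw [add_mul, sub_mul, hDp, hDm]; noncomm_ring
      _ = B * projL S - (blockA B S + adjoint (blockB B S)) := by
          rw [hdec.blockA_eq hB, hadj]
      _ = 0 := by rw [blockA_add_adjoint_blockB hB, sub_self]
  have hB2 : (adjoint Dp * Dp).IsPositive := isPositive_adjoint_comp_self Dp
  have hB3 : (adjoint Dm * Dm).IsPositive := isPositive_adjoint_comp_self Dm
  refine ⟨_, _, _, (hB.sub hB2.isSelfAdjoint).add hB3.isSelfAdjoint, hB2.isSelfAdjoint,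
    hB3.isSelfAdjoint, hB2, hB3, by abel, mul_projL_eq_zero_iff.mp hB1,
    mul_projL_eq_zero_iff.mp ?_, mul_projL_eq_zero_iff.mp ?_⟩
  · rw [mul_assoc, add_mul, hdec.sqrt_mul_projL_right hB, mul_assoc, hfm, mul_zero, add_zero,
      mul_zero]
  · rw [mul_assoc, add_mul, hdec.sqrt_neg_mul_projL_left hB, mul_assoc, neg_mul, hfp, neg_zero,
      mul_zero, add_zero, mul_zero]

end IsWDecomp

namespace HasKernelSplitting

variable {B : H →L[ℂ] H} {S Sp Sm : Submodule ℂ H}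

lemma nonempty_Mminus (h : HasKernelSplitting B S Sp Sm) (hSp : Sp ≤ S) :
    (Mminus B Spᗮ).Nonempty := by
  obtain ⟨B1, B2, B3, h1, -, h3, h2, -, rfl, hS, -, hp⟩ := h
  refine ⟨B1 - B3, h1.sub h3, by rwa [show B1 + B2 - B3 - (B1 - B3) = B2 by abel], ?_⟩
  exact range_le_orthogonal_of_le_ker (h1.sub h3) fun x hx => by
    simp [show B1 x = 0 from hS (hSp hx), show B3 x = 0 from hp hx]

lemma nonempty_Mplus (h : HasKernelSplitting B S Sp Sm) (hSm : Sm ≤ S) :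
    (Mplus B Smᗮ).Nonempty := by
  obtain ⟨B1, B2, B3, h1, h2, -, -, h3, rfl, hS, hm, -⟩ := h
  refine ⟨B1 + B2, h1.add h2, by rwa [show B1 + B2 - (B1 + B2 - B3) = B3 by abel], ?_⟩
  exact range_le_orthogonal_of_le_ker (h1.add h2) fun x hx => by
    simp [show B1 x = 0 from hS (hSm hx), show B2 x = 0 from hm hx]

end HasKernelSplitting

section Extremal

variable {B X : H →L[ℂ] H} {U : Submodule ℂ H} [U.HasOrthogonalProjection]

lemma isWeaklyComplementable_of_mem_Mminus (hX : X ∈ Mminus B Uᗮ) :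
    IsWeaklyComplementable B U :=
  (isWeaklyComplementable_sub_iff hX.2.2).mp (hX.2.1.isWeaklyComplementable U)

lemma isWeaklyComplementable_of_mem_Mplus (hX : X ∈ Mplus B Uᗮ) :
    IsWeaklyComplementable B U := by
  have h := hX.2.1.isWeaklyComplementable U
  rwa [← neg_sub, isWeaklyComplementable_neg_iff, isWeaklyComplementable_sub_iff hX.2.2] at h

end Extremal

/-- Equivalent characterizations of `S`-weak complementability in terms of a decomposition
`S = S₊ ⊕_B S₋`. -/
theorem stmt_1 (B : H →L[ℂ] H) (hB : IsSelfAdjoint B)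
    (S Sp Sm : Submodule ℂ H) [CompleteSpace S] [CompleteSpace Sp] [CompleteSpace Sm]
    (hdec : IsWDecomp B S Sp Sm) :
    (IsWeaklyComplementable B S ↔
      ∃ B1 B2 B3 : H →L[ℂ] H, IsSelfAdjoint B1 ∧ IsSelfAdjoint B2 ∧ IsSelfAdjoint B3 ∧
        B2.IsPositive ∧ B3.IsPositive ∧ B = B1 + B2 - B3 ∧
        S ≤ LinearMap.ker (B1 : H →ₗ[ℂ] H) ∧ Sm ≤ LinearMap.ker (B2 : H →ₗ[ℂ] H) ∧ Sp ≤ LinearMap.ker (B3 : H →ₗ[ℂ] H)) ∧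
    (IsWeaklyComplementable B S ↔
      ((Mminus B Spᗮ).Nonempty ∧ (Mplus B Smᗮ).Nonempty)) ∧
    (IsWeaklyComplementable B S ↔
      (IsWeaklyComplementable B Sp ∧ IsWeaklyComplementable B Sm)) := by
  have h12 := hdec.hasKernelSplitting hB
  have h23 (h : HasKernelSplitting B S Sp Sm) :
      (Mminus B Spᗮ).Nonempty ∧ (Mplus B Smᗮ).Nonempty :=
    ⟨h.nonempty_Mminus hdec.le_left, h.nonempty_Mplus hdec.le_right⟩
  have h34 (h : (Mminus B Spᗮ).Nonempty ∧ (Mplus B Smᗮ).Nonempty) :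
      IsWeaklyComplementable B Sp ∧ IsWeaklyComplementable B Sm :=
    ⟨isWeaklyComplementable_of_mem_Mminus h.1.some_mem,
      isWeaklyComplementable_of_mem_Mplus h.2.some_mem⟩
  have h41 (h : IsWeaklyComplementable B Sp ∧ IsWeaklyComplementable B Sm) :
      IsWeaklyComplementable B S :=
    hdec.isWeaklyComplementable_of_left_of_right hB h.1 h.2
  exact ⟨⟨h12, fun h => h41 (h34 (h23 h))⟩, ⟨fun h => h23 (h12 h), fun h => h41 (h34 h)⟩,
    ⟨fun h => h34 (h23 (h12 h)), h41⟩⟩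
end
end

section
/- Let B be a bounded selfadjoint operator on a complex Hilbert space H and let S be a closed subspace of H that is B-nonnegative (⟨Bs,s⟩ ≥ 0 for all s ∈ S). Then B is S-weakly complementable if and only if the set {Q*BQ : Q a bounded idempotent on H with N(Q) = S} has a greatest lower bound in the Loewner order on selfadjoint operators. In this case this greatest lower bound equals B_{/S}. -/
set_option linter.unusedSectionVars false

open ContinuousLinearMap

noncomputable section

variable {H : Type*} [NormedAddCommGroup H] [InnerProductSpace ℂ H] [CompleteSpace H]

/-!
Write `P` for the projection onto `S`, `P' = 1 - P`, and `a, b, c` for the blocks of `B`.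
An idempotent `Q` with kernel `S` has `Q y = P' y + s` with `s = P (Q y) ∈ S`, and when `y ∉ S`
every `s ∈ S` occurs, for a rank-one perturbation of `P'`. So the quadratic forms of the
operators `Q⋆BQ` at `y` are the numbers `⟨c y, y⟩ + ⟨a s, s⟩ + 2 re ⟨b y, s⟩`, `s ∈ S`.

If `b = a^{1/2} f` with `range f ⊆ (ker a^{1/2})ᗮ`, this number is
`⟨(c - f⋆f) y, y⟩ + ‖f y + a^{1/2} s‖²`, and `f y` lies in the closure of `a^{1/2}(S)`; hence
`c - f⋆f` is the infimum. Conversely, a lower bound `Z` makes `s ↦ ⟨a s, s⟩ + 2 re ⟨b y, s⟩ + γ`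
nonnegative on `S` with `γ = ⟨(c - Z) y, y⟩`, so `|⟨b y, x⟩| ≤ √γ ‖a^{1/2} x‖` by the discriminant,
and Hahn–Banach with the Riesz representation puts `b y` in the range of `a^{1/2}`; the closed
graph theorem then makes the reduced solution `f` bounded. Since `a ≥ 0`, the partial isometry
of `a = u |a|` is the projection onto `(ker a)ᗮ ⊇ range f`, so `f⋆ u f = f⋆ f`.
-/

open scoped InnerProductSpace Topology

section HilbertOperators

variable {𝕜 E F G : Type*} [RCLike 𝕜]
  [NormedAddCommGroup E] [InnerProductSpace 𝕜 E]
  [NormedAddCommGroup F] [InnerProductSpace 𝕜 F]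
  [NormedAddCommGroup G] [NormedSpace 𝕜 G]

theorem eq_of_mem_orthogonal_ker (m : E →L[𝕜] F) {x x' : E} (hx : x ∈ m.kerᗮ)
    (hx' : x' ∈ m.kerᗮ) (h : m x = m x') : x = x' := by
  rw [← sub_eq_zero]
  refine (Submodule.mem_bot 𝕜).mp ?_
  rw [← m.ker.inf_orthogonal_eq_bot]
  exact ⟨by simp [h], m.kerᗮ.sub_mem hx hx'⟩

theorem exists_linearMap_range_rightInverse [CompleteSpace E] (m : E →L[𝕜] F) :
    ∃ r : m.range →ₗ[𝕜] E, ∀ z, m (r z) = z ∧ r z ∈ m.kerᗮ := by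
  set N := m.kerᗮ
  have hinj : Function.Injective (m.toLinearMap ∘ₗ N.subtype) := fun x x' h =>
    Subtype.ext (eq_of_mem_orthogonal_ker m x.2 x'.2 h)
  have hrange : m.range = LinearMap.range (m.toLinearMap ∘ₗ N.subtype) := by
    refine le_antisymm ?_ (LinearMap.range_comp_le_range _ _)
    rintro _ ⟨x, rfl⟩
    refine ⟨N.orthogonalProjectionOnto x, ?_⟩
    have h := N.sub_starProjection_mem_orthogonal x
    rw [Submodule.orthogonal_orthogonal, LinearMap.mem_ker, map_sub, sub_eq_zero] at h
    exact h.symm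
  let e := LinearEquiv.ofInjective _ hinj
  refine ⟨N.subtype ∘ₗ e.symm.toLinearMap ∘ₗ (LinearEquiv.ofEq _ _ hrange).toLinearMap,
    fun z => ⟨?_, Submodule.coe_mem _⟩⟩
  exact congrArg Subtype.val (e.apply_symm_apply (LinearEquiv.ofEq _ _ hrange z))

theorem exists_comp_eq_of_range_le [CompleteSpace E] [CompleteSpace G] (m : E →L[𝕜] F)
    (b : G →L[𝕜] F) (h : b.range ≤ m.range) :
    ∃ f : G →L[𝕜] E, m ∘L f = b ∧ f.range ≤ m.kerᗮ := by
  obtain ⟨r, hr⟩ := exists_linearMap_range_rightInverse m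
  let g : G →ₗ[𝕜] E := r ∘ₗ b.toLinearMap.codRestrict m.range fun y => h ⟨y, rfl⟩
  have hmg : ∀ y, m (g y) = b y := fun y => (hr _).1
  have hg : ∀ y, g y ∈ m.kerᗮ := fun y => (hr _).2
  have hclosed : ∀ (u : ℕ → G) x y, Filter.Tendsto u Filter.atTop (𝓝 x) →
      Filter.Tendsto (g ∘ u) Filter.atTop (𝓝 y) → y = g x := by
    intro u x y hu hgu
    refine eq_of_mem_orthogonal_ker m ?_ (hg x)
      (tendsto_nhds_unique (f := fun n => m (g (u n))) (l := Filter.atTop) ?_ ?_)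
    · exact (Submodule.isClosed_orthogonal _).mem_of_tendsto hgu (.of_forall fun n => hg (u n))
    · exact (m.continuous.tendsto y).comp hgu
    · simpa [Function.comp_def, hmg] using (b.continuous.tendsto x).comp hu
  refine ⟨⟨g, g.continuous_of_seq_closed_graph hclosed⟩, ?_, ?_⟩
  · ext y
    exact hmg y
  · rintro _ ⟨y, rfl⟩
    exact hg y

theorem mem_range_adjoint_of_norm_inner_le [CompleteSpace E] [CompleteSpace F] (m : E →L[𝕜] F)
    {v : E} {C : ℝ} (h : ∀ x, ‖⟪v, x⟫_𝕜‖ ≤ C * ‖m x‖) : v ∈ (adjoint m).range := by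
  obtain ⟨r, hr⟩ := exists_linearMap_range_rightInverse m
  have hvr : ∀ x, ⟪v, r ⟨m x, x, rfl⟩⟫_𝕜 = ⟪v, x⟫_𝕜 := by
    intro x
    have hk := h (r ⟨m x, x, rfl⟩ - x)
    rw [map_sub, (hr _).1, sub_self, norm_zero, mul_zero, norm_le_zero_iff, inner_sub_right,
      sub_eq_zero] at hk
    exact hk
  let φ : StrongDual 𝕜 m.range := (innerₛₗ 𝕜 v ∘ₗ r).mkContinuous C fun z => by
    simpa [(hr z).1] using h (r z)
  obtain ⟨g, hg, -⟩ := exists_extension_norm_eq m.range φ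
  refine ⟨(InnerProductSpace.toDual 𝕜 F).symm g, ext_inner_right 𝕜 fun x => ?_⟩
  rw [coe_coe, adjoint_inner_left, InnerProductSpace.toDual_symm_apply, hg ⟨m x, x, rfl⟩]
  exact hvr x

theorem norm_inner_le_of_re_inner_le (m : E →L[𝕜] F) {v : E} {C : ℝ} (hC : 0 ≤ C)
    (h : ∀ x, RCLike.re ⟪v, x⟫_𝕜 ≤ C * ‖m x‖) (x : E) : ‖⟪v, x⟫_𝕜‖ ≤ C * ‖m x‖ := by
  set z := ⟪v, x⟫_𝕜
  have key : ‖z‖ * ‖z‖ ≤ ‖z‖ * (C * ‖m x‖) :=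
    calc ‖z‖ * ‖z‖ = RCLike.re ⟪v, (starRingEnd 𝕜) z • x⟫_𝕜 := by
          rw [inner_smul_right, RCLike.conj_mul, ← RCLike.ofReal_pow, RCLike.ofReal_re, sq]
      _ ≤ C * ‖m ((starRingEnd 𝕜) z • x)‖ := h _
      _ = ‖z‖ * (C * ‖m x‖) := by rw [map_smul, norm_smul, RCLike.norm_conj]; ring
  rcases (norm_nonneg z).eq_or_lt with hz | hz
  · rw [← hz]
    positivity
  · exact le_of_mul_le_mul_left key hz

theorem re_inner_le_of_isPositive_sub {X Y : E →L[𝕜] E} (h : (X - Y).IsPositive) (y : E) :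
    RCLike.re ⟪Y y, y⟫_𝕜 ≤ RCLike.re ⟪X y, y⟫_𝕜 := by
  have := h.re_inner_nonneg_left y
  rw [sub_apply, inner_sub_left, map_sub] at this
  linarith

theorem isPositive_sub_of_re_inner_le [CompleteSpace E] {X Y : E →L[𝕜] E} (hX : IsSelfAdjoint X)
    (hY : IsSelfAdjoint Y) (h : ∀ y, RCLike.re ⟪Y y, y⟫_𝕜 ≤ RCLike.re ⟪X y, y⟫_𝕜) :
    (X - Y).IsPositive := by
  refine isPositive_def'.mpr ⟨hX.sub hY, fun y => ?_⟩
  rw [reApplyInnerSelf_apply, sub_apply, inner_sub_left, map_sub, sub_nonneg]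
  exact h y

theorem IsSelfAdjoint.ker_mul_self [CompleteSpace E] {m : E →L[𝕜] E} (hm : IsSelfAdjoint m) :
    (m * m).ker = m.ker := by
  have h := m.ker_adjoint_comp_self
  rw [hm.adjoint_eq] at h
  exact h

end HilbertOperators

theorem IsGLBOf.unique {M : Set (H →L[ℂ] H)} {Z Z' : H →L[ℂ] H} (h : IsGLBOf M Z)
    (h' : IsGLBOf M Z') : Z = Z' :=
  le_antisymm (h'.2.2 Z h.1 h.2.1) (h.2.2 Z' h'.1 h'.2.1)

theorem isSqrtAbs_iff_eq_sqrt {a m : H →L[ℂ] H} (ha : 0 ≤ a) :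
    IsSqrtAbs a m ↔ m = CFC.sqrt a := by
  have haa : adjoint a * a = a * a := by
    rw [← star_eq_adjoint, (IsSelfAdjoint.of_nonneg ha).star_eq]
  rw [IsSqrtAbs, ← nonneg_iff_isPositive, haa, show (4 : ℕ) = 2 * 2 from rfl, pow_mul, sq, sq]
  constructor
  · rintro ⟨hm, h4⟩
    have hmm : 0 ≤ m * m := by
      simpa [(IsSelfAdjoint.of_nonneg hm).star_eq] using star_mul_self_nonneg m
    have hsq : m * m = a := by rw [← CFC.sqrt_mul_self a, ← CFC.sqrt_unique h4]
    exact (CFC.sqrt_unique hsq).symm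
  · rintro rfl
    exact ⟨CFC.sqrt_nonneg a, by rw [CFC.sqrt_mul_sqrt_self a]⟩

section Blocks

variable {S : Submodule ℂ H} [S.HasOrthogonalProjection]

theorem one_sub_projL : 1 - projL S = Sᗮ.starProjection :=
  (S.starProjection_orthogonal').symm

theorem blockA_apply (B : H →L[ℂ] H) (x : H) :
    blockA B S x = S.starProjection (B (S.starProjection x)) := rfl

theorem blockB_apply (B : H →L[ℂ] H) (x : H) :
    blockB B S x = S.starProjection (B (Sᗮ.starProjection x)) := by
  rw [blockB, one_sub_projL]; rfl

theorem blockC_apply (B : H →L[ℂ] H) (x : H) :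
    blockC B S x = Sᗮ.starProjection (B (Sᗮ.starProjection x)) := by
  rw [blockC, one_sub_projL]; rfl

theorem isSelfAdjoint_blockC {B : H →L[ℂ] H} (hB : IsSelfAdjoint B) :
    IsSelfAdjoint (blockC B S) := by
  rw [blockC, one_sub_projL]
  exact hB.conjugate_self (isSelfAdjoint_starProjection _)

theorem blockA_nonneg {B : H →L[ℂ] H} (hB : IsSelfAdjoint B)
    (hpos : ∀ s ∈ S, 0 ≤ (inner ℂ (B s) s : ℂ).re) : 0 ≤ blockA B S := by
  refine (nonneg_iff_isPositive _).mpr (isPositive_def'.mpr ⟨?_, fun x => ?_⟩)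
  · exact hB.conjugate_self (isSelfAdjoint_starProjection _)
  · rw [reApplyInnerSelf_apply, blockA_apply, Submodule.inner_starProjection_left_eq_right]
    exact hpos _ (S.starProjection_apply_mem x)

theorem blockB_apply_of_mem {B : H →L[ℂ] H} {y : H} (hy : y ∈ S) : blockB B S y = 0 := by
  rw [blockB_apply, Submodule.starProjection_orthogonal_apply_eq_zero hy, map_zero, map_zero]

theorem inner_blockB_starProjection (B : H →L[ℂ] H) (y x : H) :
    ⟪blockB B S y, S.starProjection x⟫_ℂ = ⟪blockB B S y, x⟫_ℂ := by
  rw [← Submodule.inner_starProjection_left_eq_right, blockB_apply,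
    Submodule.starProjection_eq_self_iff.mpr (S.starProjection_apply_mem _)]

theorem re_inner_apply_add (B : H →L[ℂ] H) (hB : IsSelfAdjoint B) (y : H) {s : H} (hs : s ∈ S) :
    RCLike.re ⟪B (Sᗮ.starProjection y + s), Sᗮ.starProjection y + s⟫_ℂ =
      RCLike.re ⟪blockC B S y, y⟫_ℂ + RCLike.re ⟪blockA B S s, s⟫_ℂ
        + 2 * RCLike.re ⟪blockB B S y, s⟫_ℂ := by
  set u := Sᗮ.starProjection y
  have hPs : S.starProjection s = s := Submodule.starProjection_eq_self_iff.mpr hs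
  have hc : ⟪blockC B S y, y⟫_ℂ = ⟪B u, u⟫_ℂ := by
    rw [blockC_apply, Submodule.inner_starProjection_left_eq_right]
  have ha : ⟪blockA B S s, s⟫_ℂ = ⟪B s, s⟫_ℂ := by
    rw [blockA_apply, Submodule.inner_starProjection_left_eq_right, hPs]
  have hb : ⟪blockB B S y, s⟫_ℂ = ⟪B u, s⟫_ℂ := by
    rw [blockB_apply, Submodule.inner_starProjection_left_eq_right, hPs]
  have hsym : RCLike.re ⟪B s, u⟫_ℂ = RCLike.re ⟪B u, s⟫_ℂ := by
    rw [inner_re_symm]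
    exact congrArg RCLike.re (hB.isSymmetric u s).symm
  rw [hc, ha, hb, map_add, inner_add_left, inner_add_right, inner_add_right]
  simp only [map_add, hsym]
  ring

theorem apply_eq_starProjection_orthogonal_add {Q : H →L[ℂ] H} (hQ : Q * Q = Q)
    (hker : LinearMap.ker (Q : H →ₗ[ℂ] H) = S) (y : H) :
    Q y = Sᗮ.starProjection y + S.starProjection (Q y) := by
  have hmem : Q y - y ∈ S := by
    rw [← hker, LinearMap.mem_ker, coe_coe, map_sub, ← mul_apply_eq_comp, hQ, sub_self]
  have h := Submodule.starProjection_orthogonal_apply_eq_zero hmem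
  rw [map_sub, sub_eq_zero] at h
  rw [← h, add_comm, Submodule.starProjection_add_starProjection_orthogonal]

theorem exists_idempotent_ker_eq_apply_eq (y : H) {s : H} (hs : s ∈ S) (hys : y ∉ S ∨ s = 0) :
    ∃ Q : H →L[ℂ] H, Q * Q = Q ∧ LinearMap.ker (Q : H →ₗ[ℂ] H) = S ∧
      Q y = Sᗮ.starProjection y + s := by
  set w : H := ((‖Sᗮ.starProjection y‖ : ℂ) ^ 2)⁻¹ • Sᗮ.starProjection y
  have hw : w ∈ Sᗮ := Sᗮ.smul_mem _ (Sᗮ.starProjection_apply_mem y)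
  have hwP : ∀ x, ⟪w, Sᗮ.starProjection x⟫_ℂ = ⟪w, x⟫_ℂ := fun x => by
    rw [← Submodule.inner_starProjection_left_eq_right,
      Submodule.starProjection_eq_self_iff.mpr hw]
  have hws : ⟪w, s⟫_ℂ = 0 := Submodule.inner_left_of_mem_orthogonal hs hw
  have hPs : Sᗮ.starProjection s = 0 := Submodule.starProjection_orthogonal_apply_eq_zero hs
  have hPP : ∀ x, Sᗮ.starProjection (Sᗮ.starProjection x) = Sᗮ.starProjection x := fun x =>
    Submodule.starProjection_eq_self_iff.mpr (Sᗮ.starProjection_apply_mem x)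
  refine ⟨Sᗮ.starProjection + (innerSL ℂ w).smulRight s, ?_, ?_, ?_⟩
  · ext x
    simp only [mul_apply_eq_comp, add_apply, smulRight_apply, innerSL_apply_apply, map_add,
      map_smul, hPP, hPs, hwP, hws, smul_zero, zero_smul, add_zero]
  · ext x
    simp only [LinearMap.mem_ker, coe_coe, add_apply, smulRight_apply, innerSL_apply_apply]
    constructor
    · intro hx
      have h := congrArg Sᗮ.starProjection hx
      rw [map_add, map_smul, hPs, smul_zero, add_zero, hPP, map_zero,
        Submodule.starProjection_apply_eq_zero_iff, Submodule.orthogonal_orthogonal] at h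
      exact h
    · intro hx
      rw [Submodule.starProjection_orthogonal_apply_eq_zero hx,
        Submodule.inner_left_of_mem_orthogonal hx hw, zero_smul, add_zero]
  · rcases hys with hy | rfl
    · have hu : Sᗮ.starProjection y ≠ 0 := fun h => hy (by
        rwa [Submodule.starProjection_apply_eq_zero_iff, Submodule.orthogonal_orthogonal] at h)
      have hwy : ⟪w, y⟫_ℂ = 1 := by
        rw [← hwP, inner_smul_left, inner_self_eq_norm_sq_to_K, map_inv₀, map_pow,
          Complex.conj_ofReal]
        exact inv_mul_cancel₀ (by simpa using hu)
      simp only [add_apply, smulRight_apply, innerSL_apply_apply, hwy, one_smul]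
    · simp only [add_apply, smulRight_apply, innerSL_apply_apply, smul_zero]

theorem isSelfAdjoint_of_mem_comprSet1 {B : H →L[ℂ] H} (hB : IsSelfAdjoint B) {X : H →L[ℂ] H}
    (hX : X ∈ comprSet1 B S) : IsSelfAdjoint X := by
  obtain ⟨Q, -, -, rfl⟩ := hX
  rw [← star_eq_adjoint]
  exact hB.conjugate' Q

theorem re_inner_adjoint_mul_mul_apply (B Q : H →L[ℂ] H) (y : H) :
    RCLike.re ⟪(adjoint Q * B * Q) y, y⟫_ℂ = RCLike.re ⟪B (Q y), Q y⟫_ℂ := by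
  rw [mul_apply_eq_comp, mul_apply_eq_comp, adjoint_inner_left]

theorem exists_re_inner_eq_of_mem_comprSet1 {B X : H →L[ℂ] H} (hX : X ∈ comprSet1 B S) (y : H) :
    ∃ s ∈ S, RCLike.re ⟪X y, y⟫_ℂ =
      RCLike.re ⟪B (Sᗮ.starProjection y + s), Sᗮ.starProjection y + s⟫_ℂ := by
  obtain ⟨Q, hQ, hker, rfl⟩ := hX
  refine ⟨_, S.starProjection_apply_mem (Q y), ?_⟩
  rw [re_inner_adjoint_mul_mul_apply, ← apply_eq_starProjection_orthogonal_add hQ hker]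

theorem exists_mem_comprSet1_re_inner_eq (B : H →L[ℂ] H) (y : H) {s : H} (hs : s ∈ S)
    (hys : y ∉ S ∨ s = 0) : ∃ X ∈ comprSet1 B S, RCLike.re ⟪X y, y⟫_ℂ =
      RCLike.re ⟪B (Sᗮ.starProjection y + s), Sᗮ.starProjection y + s⟫_ℂ := by
  obtain ⟨Q, hQ, hker, hQy⟩ := exists_idempotent_ker_eq_apply_eq y hs hys
  exact ⟨_, ⟨Q, hQ, hker, rfl⟩, by rw [re_inner_adjoint_mul_mul_apply, hQy]⟩

end Blocks

section SchurComplement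

variable {S : Submodule ℂ H} [S.HasOrthogonalProjection] {B m f : H →L[ℂ] H}

theorem re_inner_blockA_apply_self (hm : IsSelfAdjoint m)
    (hma : m * m = blockA B S) (s : H) : RCLike.re ⟪blockA B S s, s⟫_ℂ = ‖m s‖ ^ 2 := by
  rw [← hma, mul_apply_eq_comp, ← adjoint_inner_right, hm.adjoint_eq, inner_self_eq_norm_sq]

theorem apply_starProjection_orthogonal_eq_zero (hm : IsSelfAdjoint m) (hma : m * m = blockA B S)
    (x : H) : m (Sᗮ.starProjection x) = 0 := by
  have h : Sᗮ.starProjection x ∈ LinearMap.ker ((m * m : H →L[ℂ] H) : H →ₗ[ℂ] H) := by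
    rw [LinearMap.mem_ker, coe_coe, hma, blockA_apply,
      (S.starProjection_apply_eq_zero_iff).mpr (Sᗮ.starProjection_apply_mem x),
      map_zero, map_zero]
  rwa [hm.ker_mul_self] at h

theorem apply_starProjection (hm : IsSelfAdjoint m) (hma : m * m = blockA B S) (x : H) :
    m (S.starProjection x) = m x := by
  conv_rhs => rw [← S.starProjection_add_starProjection_orthogonal x]
  rw [map_add, apply_starProjection_orthogonal_eq_zero hm hma, add_zero]

theorem re_inner_apply_add_eq_add_norm_sq (hB : IsSelfAdjoint B) (hm : IsSelfAdjoint m)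
    (hma : m * m = blockA B S) (hmf : m * f = blockB B S) (y : H) {s : H} (hs : s ∈ S) :
    RCLike.re ⟪B (Sᗮ.starProjection y + s), Sᗮ.starProjection y + s⟫_ℂ =
      RCLike.re ⟪(blockC B S - adjoint f * f) y, y⟫_ℂ + ‖f y + m s‖ ^ 2 := by
  have hb : ⟪blockB B S y, s⟫_ℂ = ⟪f y, m s⟫_ℂ := by
    rw [← hmf, mul_apply_eq_comp]
    exact hm.isSymmetric _ _
  rw [re_inner_apply_add B hB y hs, re_inner_blockA_apply_self hm hma, hb, sub_apply,
    inner_sub_left, map_sub, mul_apply_eq_comp, adjoint_inner_left, norm_add_sq (𝕜 := ℂ),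
    inner_self_eq_norm_sq]
  ring

theorem exists_mem_sq_norm_add_apply_lt (hm : IsSelfAdjoint m) (hma : m * m = blockA B S)
    (hmf : m * f = blockB B S) (hf : LinearMap.range (f : H →ₗ[ℂ] H) ≤ m.kerᗮ) (y : H) {ε : ℝ}
    (hε : 0 < ε) : ∃ s ∈ S, (y ∉ S ∨ s = 0) ∧ ‖f y + m s‖ ^ 2 < ε := by
  by_cases hy : y ∈ S
  · have hfy : f y = 0 := by
      refine eq_of_mem_orthogonal_ker m (hf ⟨y, rfl⟩) (Submodule.zero_mem _) ?_
      rw [← mul_apply_eq_comp, hmf, map_zero, blockB_apply_of_mem hy]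
    exact ⟨0, S.zero_mem, Or.inr rfl, by simpa [hfy] using hε⟩
  · have hcl : -f y ∈ closure (m.range : Set H) := by
      rw [← Submodule.topologicalClosure_coe, ← hm.adjoint_eq, ← orthogonal_ker]
      exact m.kerᗮ.neg_mem (hf ⟨y, rfl⟩)
    obtain ⟨_, ⟨x, rfl⟩, hx⟩ := Metric.mem_closure_iff.mp hcl (√ε) (Real.sqrt_pos.mpr hε)
    refine ⟨S.starProjection x, S.starProjection_apply_mem x, Or.inl hy, ?_⟩
    calc ‖f y + m (S.starProjection x)‖ ^ 2 = dist (-f y) (m x) ^ 2 := by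
          rw [apply_starProjection hm hma, ← norm_neg, neg_add', ← dist_eq_norm]
      _ < √ε ^ 2 := by gcongr; exact hx
      _ = ε := Real.sq_sqrt hε.le

theorem isGLBOf_comprSet1 (hB : IsSelfAdjoint B) (hm : IsSelfAdjoint m) (hma : m * m = blockA B S)
    (hmf : m * f = blockB B S) (hf : LinearMap.range (f : H →ₗ[ℂ] H) ≤ m.kerᗮ) :
    IsGLBOf (comprSet1 B S) (blockC B S - adjoint f * f) := by
  have hZ : IsSelfAdjoint (blockC B S - adjoint f * f) :=
    (isSelfAdjoint_blockC hB).sub (by simpa [star_eq_adjoint] using IsSelfAdjoint.star_mul_self f)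
  have hquad := re_inner_apply_add_eq_add_norm_sq hB hm hma hmf
  refine ⟨hZ, fun X hX => isPositive_sub_of_re_inner_le (isSelfAdjoint_of_mem_comprSet1 hB hX) hZ
    fun y => ?_, fun F hF hlow => isPositive_sub_of_re_inner_le hZ hF
    fun y => le_of_forall_pos_lt_add fun ε hε => ?_⟩
  · obtain ⟨s, hs, hXy⟩ := exists_re_inner_eq_of_mem_comprSet1 hX y
    rw [hXy, hquad y hs]
    exact le_add_of_nonneg_right (sq_nonneg _)
  · obtain ⟨s, hs, hys, hlt⟩ := exists_mem_sq_norm_add_apply_lt hm hma hmf hf y hε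
    obtain ⟨X, hX, hXy⟩ := exists_mem_comprSet1_re_inner_eq B y hs hys
    calc RCLike.re ⟪F y, y⟫_ℂ ≤ RCLike.re ⟪X y, y⟫_ℂ := re_inner_le_of_isPositive_sub (hlow X hX) y
      _ = RCLike.re ⟪(blockC B S - adjoint f * f) y, y⟫_ℂ + ‖f y + m s‖ ^ 2 := by
          rw [hXy, hquad y hs]
      _ < _ := by gcongr

theorem range_blockB_le_of_forall_isPositive_sub (hB : IsSelfAdjoint B) (hm : IsSelfAdjoint m)
    (hma : m * m = blockA B S) {Z : H →L[ℂ] H} (hZ : ∀ X ∈ comprSet1 B S, (X - Z).IsPositive) :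
    LinearMap.range (blockB B S : H →ₗ[ℂ] H) ≤ LinearMap.range (m : H →ₗ[ℂ] H) := by
  rintro _ ⟨y, rfl⟩
  by_cases hy : y ∈ S
  · exact ⟨0, by rw [map_zero, coe_coe, blockB_apply_of_mem hy]⟩
  set γ := RCLike.re ⟪blockC B S y, y⟫_ℂ - RCLike.re ⟪Z y, y⟫_ℂ
  have hquad : ∀ s ∈ S, 0 ≤ ‖m s‖ ^ 2 + 2 * RCLike.re ⟪blockB B S y, s⟫_ℂ + γ := by
    intro s hs
    obtain ⟨X, hX, hXy⟩ := exists_mem_comprSet1_re_inner_eq B y hs (Or.inl hy)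
    have h := re_inner_le_of_isPositive_sub (hZ X hX) y
    rw [hXy, re_inner_apply_add B hB y hs, re_inner_blockA_apply_self hm hma] at h
    linarith
  have hγ : 0 ≤ γ := by simpa using hquad 0 S.zero_mem
  have hre : ∀ x, RCLike.re ⟪blockB B S y, x⟫_ℂ ≤ √γ * ‖m x‖ := by
    intro x
    rw [← inner_blockB_starProjection, ← apply_starProjection hm hma x]
    have hs := S.starProjection_apply_mem x
    set s := S.starProjection x
    have hdisc := discrim_le_zero (a := ‖m s‖ ^ 2) (b := 2 * RCLike.re ⟪blockB B S y, s⟫_ℂ)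
      (c := γ) fun t => by
        have := hquad ((t : ℂ) • s) (S.smul_mem _ hs)
        rw [map_smul, norm_smul, inner_smul_right] at this
        simp only [Complex.norm_real, Real.norm_eq_abs, mul_pow, sq_abs, RCLike.re_to_complex,
          Complex.re_ofReal_mul] at this
        linear_combination this
    rw [discrim] at hdisc
    calc RCLike.re ⟪blockB B S y, s⟫_ℂ ≤ √(‖m s‖ ^ 2 * γ) := le_trans (le_abs_self _)
          (Real.abs_le_sqrt (by nlinarith))
      _ = √γ * ‖m s‖ := by rw [Real.sqrt_mul (sq_nonneg _), Real.sqrt_sq (norm_nonneg _), mul_comm]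
  have h := mem_range_adjoint_of_norm_inner_le m
    (norm_inner_le_of_re_inner_le m (Real.sqrt_nonneg γ) hre)
  rwa [hm.adjoint_eq] at h

theorem isSchur_of_sqrt_mul_eq (hB : IsSelfAdjoint B) (hpos : ∀ s ∈ S, 0 ≤ (inner ℂ (B s) s : ℂ).re)
    (hmf : CFC.sqrt (blockA B S) * f = blockB B S)
    (hf : LinearMap.range (f : H →ₗ[ℂ] H) ≤ (CFC.sqrt (blockA B S)).kerᗮ) :
    IsSchur B S (blockC B S - adjoint f * f) := by
  have ha := blockA_nonneg hB hpos
  have hm : IsSelfAdjoint (CFC.sqrt (blockA B S)) := .of_nonneg (CFC.sqrt_nonneg _)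
  have hker : (CFC.sqrt (blockA B S)).ker = (blockA B S).ker := by
    rw [← hm.ker_mul_self, CFC.sqrt_mul_sqrt_self _ ha]
  have hu : ∀ x ∈ (blockA B S).kerᗮ, (blockA B S).kerᗮ.starProjection x = x := fun x hx =>
    Submodule.starProjection_eq_self_iff.mpr hx
  refine ⟨_, _, f, (isSqrtAbs_iff_eq_sqrt ha).mpr rfl, ?_, fun x hx => by rw [hu x hx], ?_, hmf,
    ?_, ?_⟩
  · rw [Submodule.ker_starProjection, Submodule.orthogonal_orthogonal]
  · ext x
    rw [sq, CFC.sqrt_mul_sqrt_self _ ha, mul_apply_eq_comp, hu]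
    rw [orthogonal_ker, (IsSelfAdjoint.of_nonneg ha).adjoint_eq]
    exact Submodule.le_topologicalClosure _ ⟨x, rfl⟩
  · rwa [orthogonal_ker, hm.adjoint_eq] at hf
  · congr 2
    ext y
    rw [mul_apply_eq_comp, hu]
    exact hker ▸ hf ⟨y, rfl⟩

end SchurComplement

/-- For a `B`-nonnegative closed subspace `S`, `B` is `S`-weakly complementable iff
`inf {Q⋆BQ : Q² = Q, N(Q) = S}` exists; in that case the infimum is `B_{/S}`. -/
theorem stmt_7 (B : H →L[ℂ] H) (hB : IsSelfAdjoint B)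
    (S : Submodule ℂ H) [CompleteSpace S]
    (hpos : ∀ s ∈ S, 0 ≤ (inner ℂ (B s) s : ℂ).re) :
    (IsWeaklyComplementable B S ↔ ∃ Z, IsGLBOf (comprSet1 B S) Z) ∧
    (∀ Z, IsGLBOf (comprSet1 B S) Z → IsSchur B S Z) := by
  have ha := blockA_nonneg hB hpos
  have hm : IsSelfAdjoint (CFC.sqrt (blockA B S)) := .of_nonneg (CFC.sqrt_nonneg _)
  have hma := CFC.sqrt_mul_sqrt_self _ ha
  refine ⟨⟨fun ⟨m, hm', hb⟩ => ?_, fun ⟨Z, hZ⟩ => ?_⟩, fun Z hZ => ?_⟩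
  · rw [(isSqrtAbs_iff_eq_sqrt ha).mp hm'] at hb
    obtain ⟨f, hmf, hf⟩ := exists_comp_eq_of_range_le _ _ hb
    exact ⟨_, isGLBOf_comprSet1 hB hm hma hmf hf⟩
  · exact ⟨_, (isSqrtAbs_iff_eq_sqrt ha).mpr rfl,
      range_blockB_le_of_forall_isPositive_sub hB hm hma hZ.2.1⟩
  · obtain ⟨f, hmf, hf⟩ :=
      exists_comp_eq_of_range_le _ _ (range_blockB_le_of_forall_isPositive_sub hB hm hma hZ.2.1)
    rw [hZ.unique (isGLBOf_comprSet1 hB hm hma hmf hf)]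
    exact isSchur_of_sqrt_mul_eq hB hpos hmf hf
end
end

section
/- Let B be a bounded selfadjoint operator on a complex Hilbert space H and S a closed subspace of H such that B is S-complementable (hence also S-weakly complementable). Then for every Q ∈ P(B,S): B_{/S} = B(I − Q) = (I − Q)*B. -/
open ContinuousLinearMap

noncomputable section

variable {H : Type*} [NormedAddCommGroup H] [InnerProductSpace ℂ H] [CompleteSpace H]

/-!
Complementability gives a bounded `q` with `a q = b`: project onto `S` along a closed complement
of `S` inside `B⁻¹(Sᗮ)`. Writing `a = |a|^{1/2} g(a)` with `g` a signed square root then shows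
`range b ⊆ range |a|^{1/2}`. Each `Q ∈ P(B,S)` also gives such a `q`, namely `Q P_{Sᗮ}`, and for
any such `q` the correction term of the Schur complement is `f⋆ u f = b⋆ q`. Finally
`P_S B Q = P_S B` and `Q P_S = P_S` turn `c - b⋆ Q P_{Sᗮ} = P_{Sᗮ} B (1 - Q) P_{Sᗮ}` into
`B (1 - Q) = (1 - Q)⋆ B`.
-/

section InnerProductSpace

variable {𝕜 E F : Type*} [RCLike 𝕜] [NormedAddCommGroup E] [InnerProductSpace 𝕜 E] [CompleteSpace E]
  [NormedAddCommGroup F] [InnerProductSpace 𝕜 F] [CompleteSpace F]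

lemma IsSelfAdjoint.ker_mul_self_s10 {T : E →L[𝕜] E} (hT : IsSelfAdjoint T) :
    LinearMap.ker ((T * T : E →L[𝕜] E) : E →ₗ[𝕜] E) = LinearMap.ker (T : E →ₗ[𝕜] E) := by
  have h := T.ker_adjoint_comp_self
  rwa [hT.adjoint_eq] at h

lemma IsSelfAdjoint.topologicalClosure_range {T : E →L[𝕜] E} (hT : IsSelfAdjoint T) :
    (LinearMap.range (T : E →ₗ[𝕜] E)).topologicalClosure = (LinearMap.ker (T : E →ₗ[𝕜] E))ᗮ := by
  rw [T.orthogonal_ker, hT.adjoint_eq]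

lemma ContinuousLinearMap.adjoint_apply_mem_orthogonal_ker (T : E →L[𝕜] F) (y : F) :
    adjoint T y ∈ (LinearMap.ker (T : E →ₗ[𝕜] F))ᗮ := by
  rw [T.orthogonal_ker]
  exact Submodule.le_topologicalClosure _ ⟨y, rfl⟩

lemma IsSelfAdjoint.ext_of_eqOn_ker {T A B : E →L[𝕜] E} (hT : IsSelfAdjoint T)
    (hker : ∀ x ∈ LinearMap.ker (T : E →ₗ[𝕜] E), A x = B x) (hrange : A * T = B * T) :
    A = B := by
  have : CompleteSpace (LinearMap.ker (T : E →ₗ[𝕜] E)) := T.isClosed_ker.completeSpace_coe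
  have hrange' :
      (LinearMap.ker (T : E →ₗ[𝕜] E))ᗮ ≤ LinearMap.ker ((A - B : E →L[𝕜] E) : E →ₗ[𝕜] E) := by
    rw [← hT.topologicalClosure_range]
    refine Submodule.topologicalClosure_minimal _ ?_ (A - B).isClosed_ker
    rintro _ ⟨x, rfl⟩
    simpa [sub_eq_zero] using congr($hrange x)
  have hker' : LinearMap.ker (T : E →ₗ[𝕜] E) ≤ LinearMap.ker ((A - B : E →L[𝕜] E) : E →ₗ[𝕜] E) :=
    fun x hx => by simpa [sub_eq_zero] using hker x hx
  have htop := sup_le hker' hrange'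
  rw [Submodule.sup_orthogonal_of_hasOrthogonalProjection] at htop
  ext x
  simpa [sub_eq_zero] using htop (Submodule.mem_top (x := x))

lemma ContinuousLinearMap.adjoint_apply_apply_of_mem_orthogonal_ker {u : E →L[𝕜] F}
    (hu : ∀ x ∈ (LinearMap.ker (u : E →ₗ[𝕜] F))ᗮ, ‖u x‖ = ‖x‖) {x : E}
    (hx : x ∈ (LinearMap.ker (u : E →ₗ[𝕜] F))ᗮ) : adjoint u (u x) = x := by
  set K := (LinearMap.ker (u : E →ₗ[𝕜] F))ᗮ
  have hinner : ∀ y z : K, inner 𝕜 (u y) (u z) = inner 𝕜 (y : E) z :=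
    (LinearMap.norm_map_iff_inner_map_map ((u : E →ₗ[𝕜] F) ∘ₗ K.subtype)).mp fun y => hu y y.2
  set z := adjoint u (u x) - x
  have hz : z ∈ K := K.sub_mem (u.adjoint_apply_mem_orthogonal_ker _) hx
  have hzz : inner 𝕜 z z = 0 := by
    rw [inner_sub_left, adjoint_inner_left, hinner ⟨x, hx⟩ ⟨z, hz⟩, sub_self]
  exact sub_eq_zero.mp (inner_self_eq_zero.mp hzz)

lemma ContinuousLinearMap.adjoint_apply_eq_zero_of_range_le {f m : E →L[𝕜] E}
    (hm : IsSelfAdjoint m)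
    (hf : LinearMap.range (f : E →ₗ[𝕜] E) ≤ (LinearMap.range (m : E →ₗ[𝕜] E)).topologicalClosure)
    {x : E} (hx : x ∈ LinearMap.ker (m : E →ₗ[𝕜] E)) : adjoint f x = 0 := by
  rw [hm.topologicalClosure_range] at hf
  refine ext_inner_right 𝕜 fun y => ?_
  rw [adjoint_inner_left, inner_zero_left]
  exact Submodule.inner_right_of_mem_orthogonal hx (hf ⟨y, rfl⟩)

lemma ker_eq_ker_of_pow_four_eq {a m : E →L[𝕜] E} (ha : IsSelfAdjoint a) (hm : IsSelfAdjoint m)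
    (h4 : m ^ 4 = a * a) :
    LinearMap.ker (m : E →ₗ[𝕜] E) = LinearMap.ker (a : E →ₗ[𝕜] E) := by
  rw [← ha.ker_mul_self_s10, ← h4, show m ^ 4 = m ^ 2 * m ^ 2 by rw [← pow_add],
    (hm.pow 2).ker_mul_self_s10, pow_two, hm.ker_mul_self_s10]

/-- `R` is the projection onto `S` along the closed complement `M ⊖ (S ∩ M)`. -/
lemma Submodule.exists_clm_apply_mem_sub_mem_of_sup_eq_top {S M : Submodule 𝕜 E}
    (hS : IsClosed (S : Set E)) (hM : IsClosed (M : Set E)) (h : S ⊔ M = ⊤) :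
    ∃ R : E →L[𝕜] E, ∀ x, R x ∈ S ∧ x - R x ∈ M := by
  have : CompleteSpace (S ⊓ M : Submodule 𝕜 E) := (hS.inter hM).completeSpace_coe
  set N := (S ⊓ M)ᗮ ⊓ M
  have hSN : IsCompl S N := by
    refine ⟨Submodule.disjoint_def.mpr fun x hxS hxN => ?_, codisjoint_iff.mpr ?_⟩
    · exact inner_self_eq_zero.mp
        (Submodule.inner_right_of_mem_orthogonal (Submodule.mem_inf.mpr ⟨hxS, hxN.2⟩) hxN.1)
    · have hM' : S ⊓ M ⊔ N = M :=
        Submodule.sup_orthogonal_inf_of_hasOrthogonalProjection inf_le_right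
      rw [eq_top_iff, ← h]
      exact sup_le le_sup_left (hM'.ge.trans (sup_le (inf_le_left.trans le_sup_left) le_sup_right))
  have hN : IsClosed (N : Set E) := (Submodule.isClosed_orthogonal _).inter hM
  have hT := Submodule.IsCompl.isTopCompl_of_isClosed hSN hS hN
  exact ⟨S.projectionL N hT,
    fun x => ⟨S.projectionL_apply_mem hT x, (S.sub_projection_mem hSN x).2⟩⟩

end InnerProductSpace

section CStarAlgebra

variable {A : Type*} [CStarAlgebra A] [PartialOrder A] [StarOrderedRing A]

lemma Commute.of_pow_four {m b : A} (hm : 0 ≤ m) (h : Commute (m ^ 4) b) : Commute m b := by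
  have hm4 : m = CFC.sqrt (CFC.sqrt (m ^ 4)) := by
    rw [show m ^ 4 = (m ^ 2) ^ 2 by rw [← pow_mul], CFC.sqrt_sq (m ^ 2), CFC.sqrt_sq m]
  rw [hm4, CFC.sqrt_eq_cfc, CFC.sqrt_eq_cfc]
  exact (h.cfc_nnreal _).cfc_nnreal _

lemma IsSelfAdjoint.exists_pow_four_eq_mul_self {a : A} (ha : IsSelfAdjoint a) :
    ∃ m g : A, 0 ≤ m ∧ m ^ 4 = a * a ∧ a = m * g := by
  refine ⟨cfc (fun t : ℝ => √|t|) a, cfc (fun t : ℝ => √(max t 0) - √(max (-t) 0)) a,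
    cfc_nonneg fun (t : ℝ) _ => Real.sqrt_nonneg _, ?_, ?_⟩
  · rw [← cfc_pow (fun t : ℝ => √|t|) 4 a, ← sq, ← cfc_pow_id (R := ℝ) a 2]
    refine cfc_congr fun t _ => ?_
    rw [show 4 = 2 * 2 by rfl, pow_mul, Real.sq_sqrt (abs_nonneg t), sq_abs]
  · rw [← cfc_mul (fun t : ℝ => √|t|) (fun t : ℝ => √(max t 0) - √(max (-t) 0)) a]
    conv_lhs => rw [← cfc_id' ℝ a]
    refine cfc_congr fun t _ => ?_
    rcases le_total 0 t with h | h
    · simp [abs_of_nonneg h, h, Real.mul_self_sqrt h]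
    · simp [abs_of_nonpos h, h, Real.mul_self_sqrt (neg_nonneg.mpr h)]

end CStarAlgebra

section Polar

variable {a m u : H →L[ℂ] H}

/-- `m` is a function of `m⁴ = a²`, hence commutes with `a`; both sides vanish on `ker m`. -/
lemma mul_comm_of_polar (ha : IsSelfAdjoint a) (hm : 0 ≤ m) (h4 : m ^ 4 = a * a)
    (hku : LinearMap.ker (u : H →ₗ[ℂ] H) = LinearMap.ker (a : H →ₗ[ℂ] H)) (hau : a = u * m ^ 2) :
    u * m = m * u := by
  have hm' : IsSelfAdjoint m := IsSelfAdjoint.of_nonneg hm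
  have hkm := ker_eq_ker_of_pow_four_eq ha hm' h4
  have hcomm : Commute m a :=
    Commute.of_pow_four hm (h4 ▸ (Commute.refl a).mul_left (Commute.refl a))
  refine (hm'.pow 2).ext_of_eqOn_ker (fun x hx => ?_) ?_
  · rw [pow_two, hm'.ker_mul_self_s10] at hx
    have hux : u x = 0 := LinearMap.mem_ker.mp (hku ▸ hkm ▸ hx)
    have hmx : m x = 0 := hx
    simp [hux, hmx]
  · calc u * m * m ^ 2 = u * m ^ 2 * m := by noncomm_ring
      _ = m * a := by rw [← hau, hcomm.eq]
      _ = m * u * m ^ 2 := by rw [hau, mul_assoc]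

/-- `u⋆` commutes with `m` and inverts `u` on `range m²`, so `m (u⋆ f - m q) = u⋆ b - m² q = 0`;
as `f⋆` kills `ker m`, `f⋆ u⋆ f = f⋆ m q = b⋆ q`, and `b⋆ q = q⋆ a q` is selfadjoint. -/
lemma adjoint_mul_polar_mul_eq {b f q : H →L[ℂ] H} (ha : IsSelfAdjoint a) (hm : 0 ≤ m)
    (h4 : m ^ 4 = a * a)
    (hku : LinearMap.ker (u : H →ₗ[ℂ] H) = LinearMap.ker (a : H →ₗ[ℂ] H))
    (hiso : ∀ x ∈ (LinearMap.ker (a : H →ₗ[ℂ] H))ᗮ, ‖u x‖ = ‖x‖) (hau : a = u * m ^ 2)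
    (hmf : m * f = b)
    (hf : LinearMap.range (f : H →ₗ[ℂ] H) ≤ (LinearMap.range (m : H →ₗ[ℂ] H)).topologicalClosure)
    (haq : a * q = b) :
    adjoint f * (u * f) = adjoint b * q := by
  have hm' : IsSelfAdjoint m := IsSelfAdjoint.of_nonneg hm
  have hkm : LinearMap.ker ((m ^ 2 : H →L[ℂ] H) : H →ₗ[ℂ] H) = LinearMap.ker (u : H →ₗ[ℂ] H) := by
    rw [hku, pow_two, hm'.ker_mul_self_s10, ker_eq_ker_of_pow_four_eq ha hm' h4]
  have hmu : m * adjoint u = adjoint u * m := by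
    simpa [← star_eq_adjoint, hm'.star_eq] using congr(star $(mul_comm_of_polar ha hm h4 hku hau))
  have huu : adjoint u * u * m ^ 2 = m ^ 2 := by
    ext x
    have hmem := (m ^ 2).adjoint_apply_mem_orthogonal_ker x
    rw [(hm'.pow 2).adjoint_eq, hkm] at hmem
    exact u.adjoint_apply_apply_of_mem_orthogonal_ker (hku ▸ hiso) hmem
  have hker : m * (adjoint u * f - m * q) = 0 := by
    calc m * (adjoint u * f - m * q) = adjoint u * (m * f) - m ^ 2 * q := by
          rw [mul_sub, ← mul_assoc, hmu, mul_assoc, pow_two, mul_assoc]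
      _ = adjoint u * u * m ^ 2 * q - m ^ 2 * q := by rw [hmf, ← haq, hau]; noncomm_ring
      _ = 0 := by rw [huu, sub_self]
  have hstar : adjoint f * adjoint u * f = adjoint b * q := by
    have h0 : adjoint f * (adjoint u * f - m * q) = 0 := by
      ext x
      exact adjoint_apply_eq_zero_of_range_le hm' hf (LinearMap.mem_ker.mpr congr($hker x))
    rw [mul_sub, sub_eq_zero, ← mul_assoc, ← mul_assoc] at h0
    rw [h0, ← hmf]
    simp only [← star_eq_adjoint, star_mul, hm'.star_eq]
  simp only [← star_eq_adjoint] at hstar ⊢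
  calc star f * (u * f) = star (star f * star u * f) := by simp [mul_assoc]
    _ = star q * (a * q) := by rw [hstar, star_mul, star_star, ← haq]
    _ = star b * q := by rw [← haq, star_mul, ha.star_eq, mul_assoc]

end Polar

section Blocks

variable {B Q : H →L[ℂ] H} {S : Submodule ℂ H} [S.HasOrthogonalProjection]

lemma isSelfAdjoint_projL_s10 : IsSelfAdjoint (projL S) := isSelfAdjoint_starProjection S

omit [CompleteSpace H] in
lemma projL_mul_of_forall_mem {R : H →L[ℂ] H} (hR : ∀ x, R x ∈ S) : projL S * R = R := by
  ext x
  exact S.starProjection_eq_self_iff.mpr (hR x)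

omit [CompleteSpace H] in
lemma mul_projL_of_range_eq (hQQ : Q * Q = Q) (hQ : LinearMap.range (Q : H →ₗ[ℂ] H) = S) :
    Q * projL S = projL S := by
  ext x
  obtain ⟨y, hy⟩ : projL S x ∈ LinearMap.range (Q : H →ₗ[ℂ] H) :=
    hQ ▸ S.starProjection_apply_mem x
  change Q (projL S x) = projL S x
  rw [← show Q y = projL S x from hy]
  exact congr($hQQ y)

lemma projL_mul_of_mem_projSet (hQ : Q ∈ projSet B S) : projL S * Q = Q :=
  projL_mul_of_forall_mem fun x => hQ.2.1 ▸ LinearMap.mem_range_self (Q : H →ₗ[ℂ] H) x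

lemma isSelfAdjoint_blockA (hB : IsSelfAdjoint B) : IsSelfAdjoint (blockA B S) :=
  hB.conjugate_self isSelfAdjoint_projL_s10

lemma projL_mul_mul_of_mem_projSet (hQ : Q ∈ projSet B S) : projL S * B * Q = projL S * B := by
  have hQP : adjoint (Q * projL S) = adjoint (projL S) := by rw [mul_projL_of_range_eq hQ.1 hQ.2.1]
  simp only [← star_eq_adjoint, star_mul, isSelfAdjoint_projL_s10.star_eq] at hQP
  rw [mul_assoc, hQ.2.2, ← star_eq_adjoint, ← mul_assoc, hQP]

lemma blockA_mul_eq_blockB_of_mem_projSet (hQ : Q ∈ projSet B S) :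
    blockA B S * (Q * (1 - projL S)) = blockB B S := by
  calc blockA B S * (Q * (1 - projL S)) = projL S * B * (projL S * Q) * (1 - projL S) := by
        simp only [blockA, mul_assoc]
    _ = blockB B S := by
        rw [projL_mul_of_mem_projSet hQ, projL_mul_mul_of_mem_projSet hQ, blockB]

lemma blockC_sub_eq_of_mem_projSet (hB : IsSelfAdjoint B) (hQ : Q ∈ projSet B S) :
    blockC B S - adjoint (blockB B S) * (Q * (1 - projL S)) = B * (1 - Q) := by
  have hb : adjoint (blockB B S) = (1 - projL S) * B * projL S := by
    simp only [blockB, ← star_eq_adjoint, star_mul, star_sub, star_one,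
      isSelfAdjoint_projL_s10.star_eq, hB.star_eq, mul_assoc]
  have hl : projL S * (B * (1 - Q)) = 0 := by
    simp only [mul_sub, mul_one, ← mul_assoc, projL_mul_mul_of_mem_projSet hQ, sub_self]
  have hr : B * (1 - Q) * projL S = 0 := by
    rw [mul_assoc, sub_mul, one_mul, mul_projL_of_range_eq hQ.1 hQ.2.1, sub_self, mul_zero]
  calc blockC B S - adjoint (blockB B S) * (Q * (1 - projL S))
      = (1 - projL S) * (B * (1 - projL S * Q)) * (1 - projL S) := by
        rw [hb, blockC]; noncomm_ring
    _ = B * (1 - Q) := by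
        rw [projL_mul_of_mem_projSet hQ, sub_mul, one_mul, hl, sub_zero, mul_sub, mul_one, hr,
          sub_zero]

lemma exists_blockA_mul_eq_blockB [CompleteSpace S] (hc : IsComplementable B S) :
    ∃ q, blockA B S * q = blockB B S := by
  have hS : IsClosed (S : Set H) := (completeSpace_coe_iff_isComplete.mp ‹_›).isClosed
  have hM : IsClosed ((Sᗮ.comap (B : H →ₗ[ℂ] H) : Submodule ℂ H) : Set H) :=
    (Submodule.isClosed_orthogonal S).preimage B.continuous
  obtain ⟨R, hR⟩ := Submodule.exists_clm_apply_mem_sub_mem_of_sup_eq_top hS hM hc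
  have hPBR : projL S * B * R = projL S * B := by
    ext x
    have h0 : projL S (B (x - R x)) = 0 := S.starProjection_apply_eq_zero_iff.mpr (hR x).2
    rw [map_sub, map_sub, sub_eq_zero] at h0
    exact h0.symm
  refine ⟨R * (1 - projL S), ?_⟩
  calc blockA B S * (R * (1 - projL S)) = projL S * B * (projL S * R) * (1 - projL S) := by
        simp only [blockA, mul_assoc]
    _ = blockB B S := by rw [projL_mul_of_forall_mem fun x => (hR x).1, hPBR, blockB]

lemma isWeaklyComplementable_of_blockA_mul_eq (hB : IsSelfAdjoint B) {q : H →L[ℂ] H}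
    (hq : blockA B S * q = blockB B S) : IsWeaklyComplementable B S := by
  have ha := isSelfAdjoint_blockA (S := S) hB
  obtain ⟨m, g, hm, hm4, hmg⟩ := ha.exists_pow_four_eq_mul_self
  refine ⟨m, ⟨(nonneg_iff_isPositive m).mp hm, by rw [hm4, ha.adjoint_eq]⟩, ?_⟩
  rw [← hq, hmg, mul_assoc]
  exact LinearMap.range_comp_le_range _ _

end Blocks

/-- If `B` is `S`-complementable (hence `S`-weakly complementable), then
`B_{/S} = B(I - Q) = (I - Q)⋆B` for every `Q ∈ P(B,S)`. -/
theorem stmt_10 (B : H →L[ℂ] H) (hB : IsSelfAdjoint B)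
    (S : Submodule ℂ H) [CompleteSpace S] (hc : IsComplementable B S) :
    IsWeaklyComplementable B S ∧
    ∀ Y, IsSchur B S Y → ∀ Q ∈ projSet B S,
      Y = B * (1 - Q) ∧ Y = adjoint (1 - Q) * B := by
  obtain ⟨q, hq⟩ := exists_blockA_mul_eq_blockB hc
  refine ⟨isWeaklyComplementable_of_blockA_mul_eq hB hq, ?_⟩
  rintro Y ⟨m, u, f, ⟨hm, hm4⟩, hku, hiso, hau, hmf, hf, rfl⟩ Q hQ
  have ha := isSelfAdjoint_blockA (S := S) hB
  have hY : blockC B S - adjoint f * (u * f) = B * (1 - Q) := by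
    rw [adjoint_mul_polar_mul_eq ha ((nonneg_iff_isPositive m).mpr hm)
      (by rw [hm4, ha.adjoint_eq]) hku hiso hau hmf hf (blockA_mul_eq_blockB_of_mem_projSet hQ),
      blockC_sub_eq_of_mem_projSet hB hQ]
  refine ⟨hY, hY.trans ?_⟩
  rw [map_sub, adjoint_one, mul_sub, sub_mul, mul_one, one_mul, hQ.2.2]
end
end
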